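/- arXiv:2212.13315 — 2 statements merged into one kernel-verified Lean document; each statement's English description precedes it below -/
import Mathlib

section
/- Let p be a prime and let K be a perfectoid field of characteristic 0 with residue characteristic p and ring of integers O_K. Then the p-adic completion of the monoid algebra O_K[x^{1/p^∞}] (the integral perfectoid Tate algebra O_K⟨x^{1/p^∞}⟩) admits a family (𝔭_λ)_{λ∈(0,1)} of prime ideals, indexed by the real interval (0,1), with 𝔭_λ ⊊ 𝔭_μ whenever λ < μ; in particular it has uncountable Krull dimension. -/
set_option synthInstance.maxHeartbeats 1000000
set_option maxHeartbeats 1000000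
set_option synthInstance.maxHeartbeats 1000000
set_option maxHeartbeats 1000000
set_option linter.unusedVariables false

def pPowRat (p : ℕ) : AddSubmonoid ℚ where
  carrier := {q : ℚ | 0 ≤ q ∧ ∃ (n : ℕ) (m : ℤ), (p : ℚ) ^ n * q = (m : ℚ)}
  zero_mem' := ⟨le_rfl, 0, 0, by simp⟩
  add_mem' := by
    rintro a b ⟨ha, n, m, hm⟩ ⟨hb, n', m', hm'⟩
    refine ⟨add_nonneg ha hb, n + n', m * (p : ℤ) ^ n' + m' * (p : ℤ) ^ n, ?_⟩
    push_cast
    rw [← hm, ← hm']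
    ring

section Aux
open AddMonoidAlgebra
variable (p : ℕ) {K : Type} [Field K] (v : Valuation K NNReal)

/-- The Gauss norm of radius `ρ` on the monoid algebra. -/
noncomputable def ww (ρ : NNReal) (F : AddMonoidAlgebra v.integer (pPowRat p)) : NNReal :=
  F.coeff.support.sup fun q => v (F.coeff q : K) * ρ ^ ((q : ℚ) : ℝ)

variable {p}

lemma ww_term_le (ρ : NNReal) (F : AddMonoidAlgebra v.integer (pPowRat p)) (q : pPowRat p) :
    v (F.coeff q : K) * ρ ^ ((q : ℚ) : ℝ) ≤ ww p v ρ F := by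
  by_cases h : F.coeff q = 0
  · simp [h]
  · exact Finset.le_sup (f := fun q => v (F.coeff q : K) * ρ ^ ((q : ℚ) : ℝ))
      (Finsupp.mem_support_iff.mpr h)

lemma ww_le {ρ : NNReal} {F : AddMonoidAlgebra v.integer (pPowRat p)} {t : NNReal}
    (h : ∀ q : pPowRat p, v (F.coeff q : K) * ρ ^ ((q : ℚ) : ℝ) ≤ t) : ww p v ρ F ≤ t :=
  Finset.sup_le fun q _ => h q

lemma ww_le_one {ρ : NNReal} (hρ : ρ ≤ 1) (F : AddMonoidAlgebra v.integer (pPowRat p)) :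
    ww p v ρ F ≤ 1 := by
  refine ww_le v fun q => ?_
  have h1 : v (F.coeff q : K) ≤ 1 := (F.coeff q).2
  have h2 : ρ ^ ((q : ℚ) : ℝ) ≤ 1 :=
    NNReal.rpow_le_one hρ (by exact_mod_cast q.2.1)
  exact mul_le_one' h1 h2

lemma ww_add_le (ρ : NNReal) (F G : AddMonoidAlgebra v.integer (pPowRat p)) :
    ww p v ρ (F + G) ≤ max (ww p v ρ F) (ww p v ρ G) := by
  refine ww_le v fun q => ?_
  have h0 : (((F + G).coeff q : v.integer) : K) = (F.coeff q : K) + (G.coeff q : K) := by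
    rw [AddMonoidAlgebra.coeff_add, Finsupp.add_apply]; push_cast; ring
  rw [h0]
  rcases v.map_add' (F.coeff q : K) (G.coeff q : K) with h | h
  · exact le_max_of_le_left ((mul_le_mul_left h _).trans (ww_term_le v ρ F q))
  · exact le_max_of_le_right ((mul_le_mul_left h _).trans (ww_term_le v ρ G q))

lemma mul_apply_prod (F G : AddMonoidAlgebra v.integer (pPowRat p)) (t : pPowRat p) :
    (F * G).coeff t = ∑ qr ∈ F.coeff.support ×ˢ G.coeff.support,
      if qr.1 + qr.2 = t then F.coeff qr.1 * G.coeff qr.2 else 0 := by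
  rw [AddMonoidAlgebra.mul_apply, Finset.sum_product]
  rfl

lemma coeK_mul_apply (F G : AddMonoidAlgebra v.integer (pPowRat p)) (t : pPowRat p) :
    (((F * G).coeff t : v.integer) : K) = ∑ qr ∈ F.coeff.support ×ˢ G.coeff.support,
      if qr.1 + qr.2 = t then (F.coeff qr.1 : K) * (G.coeff qr.2 : K) else 0 := by
  rw [mul_apply_prod]
  push_cast
  refine Finset.sum_congr rfl fun qr _ => ?_
  by_cases h : qr.1 + qr.2 = t <;> simp [h]

lemma coe_add_M (q r : pPowRat p) : (((q + r : pPowRat p) : ℚ) : ℝ) = ((q:ℚ):ℝ) + ((r:ℚ):ℝ) := by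
  push_cast; rfl

lemma ww_mul_le {ρ : NNReal} (hρ : ρ ≠ 0) (F G : AddMonoidAlgebra v.integer (pPowRat p)) :
    ww p v ρ (F * G) ≤ ww p v ρ F * ww p v ρ G := by
  refine ww_le v fun t => ?_
  have hρt : ρ ^ ((t : ℚ) : ℝ) ≠ 0 := (NNReal.rpow_pos (pos_iff_ne_zero.mpr hρ)).ne'
  rw [← le_div_iff₀ (pos_iff_ne_zero.mpr hρt), coeK_mul_apply]
  refine v.map_sum_le fun qr hqr => ?_
  split_ifs with h
  · rw [le_div_iff₀ (pos_iff_ne_zero.mpr hρt), map_mul, ← h, coe_add_M, NNReal.rpow_add hρ]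
    calc v (F.coeff qr.1 : K) * v (G.coeff qr.2 : K) * (ρ ^ ((qr.1:ℚ):ℝ) * ρ ^ ((qr.2:ℚ):ℝ))
        = (v (F.coeff qr.1 : K) * ρ ^ ((qr.1:ℚ):ℝ)) * (v (G.coeff qr.2 : K) * ρ ^ ((qr.2:ℚ):ℝ)) := by ring
      _ ≤ ww p v ρ F * ww p v ρ G :=
        mul_le_mul' (ww_term_le v ρ F qr.1) (ww_term_le v ρ G qr.2)
  · simp

lemma vcoe_pos {a : v.integer} (h : a ≠ 0) : 0 < v (a : K) := by
  refine pos_iff_ne_zero.mpr fun h0 => h ?_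
  have : (a : K) = 0 := v.zero_iff.mp h0
  exact_mod_cast this

lemma ww_pos {ρ : NNReal} (hρ : ρ ≠ 0) {F : AddMonoidAlgebra v.integer (pPowRat p)}
    (hF : F ≠ 0) : 0 < ww p v ρ F := by
  obtain ⟨q, hq⟩ := Finsupp.support_nonempty_iff.mpr (mt AddMonoidAlgebra.coeff_eq_zero.mp hF)
  have h2 : (0:NNReal) < ρ ^ ((q:ℚ):ℝ) := NNReal.rpow_pos (pos_iff_ne_zero.mpr hρ)
  exact lt_of_lt_of_le (mul_pos (vcoe_pos v (Finsupp.mem_support_iff.mp hq)) h2)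
    (ww_term_le v ρ F q)

lemma ww_mul_ge {ρ : NNReal} (hρ : ρ ≠ 0) {F G : AddMonoidAlgebra v.integer (pPowRat p)}
    (hF : F ≠ 0) (hG : G ≠ 0) :
    ww p v ρ F * ww p v ρ G ≤ ww p v ρ (F * G) := by
  set wF := ww p v ρ F with hwF
  set wG := ww p v ρ G with hwG
  have hFs : F.coeff.support.Nonempty := Finsupp.support_nonempty_iff.mpr (mt AddMonoidAlgebra.coeff_eq_zero.mp hF)
  have hGs : G.coeff.support.Nonempty := Finsupp.support_nonempty_iff.mpr (mt AddMonoidAlgebra.coeff_eq_zero.mp hG)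
  set AF := F.coeff.support.filter (fun q => v (F.coeff q : K) * ρ ^ ((q:ℚ):ℝ) = wF) with hAF
  set AG := G.coeff.support.filter (fun q => v (G.coeff q : K) * ρ ^ ((q:ℚ):ℝ) = wG) with hAG
  have hAFne : AF.Nonempty := by
    obtain ⟨b, hb, hb2⟩ := Finset.exists_mem_eq_sup F.coeff.support hFs
      (fun q => v (F.coeff q : K) * ρ ^ ((q:ℚ):ℝ))
    exact ⟨b, Finset.mem_filter.mpr ⟨hb, hb2.symm⟩⟩
  have hAGne : AG.Nonempty := by
    obtain ⟨b, hb, hb2⟩ := Finset.exists_mem_eq_sup G.coeff.support hGs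
      (fun q => v (G.coeff q : K) * ρ ^ ((q:ℚ):ℝ))
    exact ⟨b, Finset.mem_filter.mpr ⟨hb, hb2.symm⟩⟩
  set q0 := AF.min' hAFne with hq0
  set r0 := AG.min' hAGne with hr0
  have hq0m : q0 ∈ AF := Finset.min'_mem AF hAFne
  have hr0m : r0 ∈ AG := Finset.min'_mem AG hAGne
  have hq0s : q0 ∈ F.coeff.support := (Finset.mem_filter.mp hq0m).1
  have hr0s : r0 ∈ G.coeff.support := (Finset.mem_filter.mp hr0m).1
  have hq0e : v (F.coeff q0 : K) * ρ ^ ((q0:ℚ):ℝ) = wF := (Finset.mem_filter.mp hq0m).2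
  have hr0e : v (G.coeff r0 : K) * ρ ^ ((r0:ℚ):ℝ) = wG := (Finset.mem_filter.mp hr0m).2
  have hwFpos : 0 < wF := ww_pos v hρ hF
  have hwGpos : 0 < wG := ww_pos v hρ hG
  have hFlt : ∀ q ∈ F.coeff.support, q < q0 → v (F.coeff q : K) * ρ ^ ((q:ℚ):ℝ) < wF := by
    intro q hq hlt
    refine lt_of_le_of_ne (ww_term_le v ρ F q) (fun he => ?_)
    exact absurd (Finset.min'_le AF q (Finset.mem_filter.mpr ⟨hq, he⟩)) (not_le.mpr hlt)
  have hGlt : ∀ r ∈ G.coeff.support, r < r0 → v (G.coeff r : K) * ρ ^ ((r:ℚ):ℝ) < wG := by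
    intro r hr hlt
    refine lt_of_le_of_ne (ww_term_le v ρ G r) (fun he => ?_)
    exact absurd (Finset.min'_le AG r (Finset.mem_filter.mpr ⟨hr, he⟩)) (not_le.mpr hlt)
  set t0 := q0 + r0 with ht0
  have hρt0 : 0 < ρ ^ ((t0:ℚ):ℝ) := NNReal.rpow_pos (pos_iff_ne_zero.mpr hρ)
  have hsplit : ρ ^ ((t0:ℚ):ℝ) = ρ ^ ((q0:ℚ):ℝ) * ρ ^ ((r0:ℚ):ℝ) := by
    rw [ht0, coe_add_M, NNReal.rpow_add hρ]
  have hmainpos : 0 < v (F.coeff q0 : K) * v (G.coeff r0 : K) :=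
    mul_pos (vcoe_pos v (Finsupp.mem_support_iff.mp hq0s))
      (vcoe_pos v (Finsupp.mem_support_iff.mp hr0s))
  have hmain : v (((F * G).coeff t0 : v.integer) : K) = v (F.coeff q0 : K) * v (G.coeff r0 : K) := by
    rw [coeK_mul_apply]
    set f : pPowRat p × pPowRat p → K :=
      fun qr => if qr.1 + qr.2 = t0 then (F.coeff qr.1 : K) * (G.coeff qr.2 : K) else 0 with hfdef
    have hjmem : (q0, r0) ∈ F.coeff.support ×ˢ G.coeff.support := Finset.mem_product.mpr ⟨hq0s, hr0s⟩
    have h0 : v (f (q0, r0)) = v (F.coeff q0 : K) * v (G.coeff r0 : K) := by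
      simp [hfdef, ht0]
    have hf' : ∀ i ∈ (F.coeff.support ×ˢ G.coeff.support) \ {(q0, r0)}, v (f i) < v (f (q0, r0))
    swap
    · rw [Finset.sum_eq_add_sum_sdiff_singleton_of_mem hjmem f, ← h0]
      exact v.map_add_eq_of_lt_left (v.map_sum_lt (by rw [h0]; exact hmainpos.ne') hf')
    intro i hi
    rw [h0]
    obtain ⟨hip, hine⟩ := Finset.mem_sdiff.mp hi
    obtain ⟨hi1, hi2⟩ := Finset.mem_product.mp hip
    simp only [hfdef]
    split_ifs with hsum
    · have hne : i ≠ (q0, r0) := by simpa using hine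
      have hsq : (i.1 : ℚ) + (i.2 : ℚ) = (q0 : ℚ) + (r0 : ℚ) := by
        have := congrArg (fun x : pPowRat p => (x : ℚ)) hsum
        push_cast at this
        simpa [ht0] using this
      have key : (v (F.coeff i.1 : K) * v (G.coeff i.2 : K)) * ρ ^ ((t0:ℚ):ℝ) < wF * wG := by
        have hsplit2 : ρ ^ ((t0:ℚ):ℝ) = ρ ^ ((i.1:ℚ):ℝ) * ρ ^ ((i.2:ℚ):ℝ) := by
          rw [← hsum, coe_add_M, NNReal.rpow_add hρ]
        rw [hsplit2]
        have harr : v (F.coeff i.1 : K) * v (G.coeff i.2 : K) * (ρ ^ ((i.1:ℚ):ℝ) * ρ ^ ((i.2:ℚ):ℝ))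
            = (v (F.coeff i.1 : K) * ρ ^ ((i.1:ℚ):ℝ)) * (v (G.coeff i.2 : K) * ρ ^ ((i.2:ℚ):ℝ)) := by ring
        rw [harr]
        rcases lt_trichotomy i.1 q0 with hlt | heq | hgt
        · calc (v (F.coeff i.1 : K) * ρ ^ ((i.1:ℚ):ℝ)) * (v (G.coeff i.2 : K) * ρ ^ ((i.2:ℚ):ℝ))
              ≤ (v (F.coeff i.1 : K) * ρ ^ ((i.1:ℚ):ℝ)) * wG :=
                mul_le_mul_right (ww_term_le v ρ G i.2) _
            _ < wF * wG := mul_lt_mul_of_pos_right (hFlt i.1 hi1 hlt) hwGpos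
        · exfalso
          apply hne
          have hq : (i.1 : ℚ) = (q0 : ℚ) := congrArg _ heq
          have h2 : (i.2 : ℚ) = (r0 : ℚ) := by linarith
          exact Prod.ext heq (Subtype.ext h2)
        · have hgt' : (q0 : ℚ) < (i.1 : ℚ) := hgt
          have hi2lt : i.2 < r0 := by
            have : (i.2 : ℚ) < (r0 : ℚ) := by linarith
            exact this
          calc (v (F.coeff i.1 : K) * ρ ^ ((i.1:ℚ):ℝ)) * (v (G.coeff i.2 : K) * ρ ^ ((i.2:ℚ):ℝ))
              ≤ wF * (v (G.coeff i.2 : K) * ρ ^ ((i.2:ℚ):ℝ)) :=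
                mul_le_mul_left (ww_term_le v ρ F i.1) _
            _ < wF * wG := mul_lt_mul_of_pos_left (hGlt i.2 hi2 hi2lt) hwFpos
      have hrw : wF * wG = (v (F.coeff q0 : K) * v (G.coeff r0 : K)) * ρ ^ ((t0:ℚ):ℝ) := by
        rw [hsplit, ← hq0e, ← hr0e]; ring
      rw [hrw] at key
      rw [map_mul]
      exact lt_of_mul_lt_mul_right key (le_of_lt hρt0)
    · rw [map_zero]; exact hmainpos
  have hterm : v (((F * G).coeff t0 : v.integer) : K) * ρ ^ ((t0:ℚ):ℝ) = wF * wG := by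
    rw [hmain, hsplit, ← hq0e, ← hr0e]; ring
  rw [← hterm]
  exact ww_term_le v ρ (F * G) t0



lemma coe_pO : (((p : v.integer) : K)) = (p : K) := by push_cast; rfl

variable (p) in
noncomputable def Iid : Ideal (AddMonoidAlgebra v.integer (pPowRat p)) :=
  Ideal.span {algebraMap v.integer (AddMonoidAlgebra v.integer (pPowRat p)) (p : v.integer)}

lemma algebraMap_eq_single (a : v.integer) :
    algebraMap v.integer (AddMonoidAlgebra v.integer (pPowRat p)) a
      = AddMonoidAlgebra.single 0 a := rfl

lemma ww_single_le (ρ : NNReal) (q : pPowRat p) (a : v.integer) :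
    ww p v ρ (AddMonoidAlgebra.single q a) ≤ v (a : K) * ρ ^ ((q:ℚ):ℝ) := by
  refine ww_le v fun q' => ?_
  by_cases h : q' = q
  · subst h; rw [AddMonoidAlgebra.coeff_single, Finsupp.single_eq_same]
  · rw [AddMonoidAlgebra.coeff_single, Finsupp.single_eq_of_ne' (Ne.symm h)]
    simp

lemma ww_single_ge (ρ : NNReal) (q : pPowRat p) (a : v.integer) :
    v (a : K) * ρ ^ ((q:ℚ):ℝ) ≤ ww p v ρ (AddMonoidAlgebra.single q a) := by
  have := ww_term_le v ρ (AddMonoidAlgebra.single q a) q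
  rwa [AddMonoidAlgebra.coeff_single, Finsupp.single_eq_same] at this

lemma smul_top_eq (N : ℕ) :
    ((Iid p v) ^ N • ⊤ : Submodule (AddMonoidAlgebra v.integer (pPowRat p))
      (AddMonoidAlgebra v.integer (pPowRat p))) = (Iid p v) ^ N := by
  ext x; simp

lemma mem_IN {N : ℕ} {x : AddMonoidAlgebra v.integer (pPowRat p)}
    (hx : x ∈ (Iid p v) ^ N) :
    ∃ G : AddMonoidAlgebra v.integer (pPowRat p),
      x = AddMonoidAlgebra.single 0 ((p : v.integer) ^ N) * G := by
  rw [Iid, Ideal.span_singleton_pow, Ideal.mem_span_singleton] at hx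
  obtain ⟨G, hG⟩ := hx
  refine ⟨G, ?_⟩
  rw [hG, algebraMap_eq_single]
  congr 1
  rw [AddMonoidAlgebra.single_pow]
  congr 1
  simp

lemma ww_IN_le {ρ : NNReal} (hρ0 : ρ ≠ 0) (hρ1 : ρ ≤ 1) {N : ℕ}
    {x : AddMonoidAlgebra v.integer (pPowRat p)} (hx : x ∈ (Iid p v) ^ N) :
    ww p v ρ x ≤ v (p : K) ^ N := by
  obtain ⟨G, hG⟩ := mem_IN v hx
  rw [hG]
  calc ww p v ρ _ ≤ ww p v ρ (AddMonoidAlgebra.single 0 ((p : v.integer) ^ N)) * ww p v ρ G :=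
        ww_mul_le v hρ0 _ _
    _ ≤ (v (((p : v.integer) ^ N : v.integer) : K) * ρ ^ (((0 : pPowRat p):ℚ):ℝ)) * 1 :=
        mul_le_mul' (ww_single_le v ρ 0 _) (ww_le_one v hρ1 G)
    _ = v (p : K) ^ N := by
        push_cast
        rw [map_pow]
        simp


lemma ww_zero (ρ : NNReal) : ww p v ρ (0 : AddMonoidAlgebra v.integer (pPowRat p)) = 0 := by
  simp [ww]

section Test

variable {v}

/-- `TestLE f i N` : the reduction of `f` mod `p^N` has Gauss norm (radius `c^i`) at most `c^N`. -/
def TestLE (f : AdicCompletion (Iid p v) (AddMonoidAlgebra v.integer (pPowRat p)))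
    (i N : ℕ) : Prop :=
  ∀ F : AddMonoidAlgebra v.integer (pPowRat p),
    Submodule.Quotient.mk F = f.val N → ww p v ((v (p : K)) ^ i) F ≤ (v (p : K)) ^ N

variable {f g : AdicCompletion (Iid p v) (AddMonoidAlgebra v.integer (pPowRat p))}

lemma lift_lower {N' N : ℕ} (hNN : N' ≤ N) {F : AddMonoidAlgebra v.integer (pPowRat p)}
    (hF : Submodule.Quotient.mk F = f.val N) : Submodule.Quotient.mk F = f.val N' := by
  have h2 := f.2 hNN
  rw [← h2, ← hF]
  rfl

lemma testLE_of_lift (hp0 : 0 < v (p : K)) (hp1 : v (p : K) < 1)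
    {i N : ℕ} {F : AddMonoidAlgebra v.integer (pPowRat p)}
    (hF : Submodule.Quotient.mk F = f.val N) (hw : ww p v ((v (p : K)) ^ i) F ≤ (v (p : K)) ^ N) :
    TestLE f i N := by
  intro F' hF'
  have hd : F' - F ∈ ((Iid p v) ^ N • ⊤ :
      Submodule (AddMonoidAlgebra v.integer (pPowRat p)) (AddMonoidAlgebra v.integer (pPowRat p))) := by
    rw [← Submodule.Quotient.eq]
    exact hF'.trans hF.symm
  rw [smul_top_eq] at hd
  have h1 : F' = F + (F' - F) := by ring
  rw [h1]
  refine (ww_add_le v _ F (F' - F)).trans (max_le hw ?_)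
  exact ww_IN_le v (pow_ne_zero _ hp0.ne') (pow_le_one' hp1.le _) hd

lemma not_testLE_all_lifts (hp0 : 0 < v (p : K)) (hp1 : v (p : K) < 1)
    {i N : ℕ} (h : ¬ TestLE f i N) :
    ∀ F : AddMonoidAlgebra v.integer (pPowRat p),
      Submodule.Quotient.mk F = f.val N → (v (p : K)) ^ N < ww p v ((v (p : K)) ^ i) F := by
  intro F hF
  by_contra hlt
  exact h (testLE_of_lift hp0 hp1 hF (not_lt.mp hlt))

lemma testLE_mono (hp0 : 0 < v (p : K)) (hp1 : v (p : K) < 1)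
    {i N' N : ℕ} (hNN : N' ≤ N) (h : TestLE f i N) : TestLE f i N' := by
  obtain ⟨F, hF⟩ := Submodule.Quotient.mk_surjective _ (f.val N)
  exact testLE_of_lift hp0 hp1 (lift_lower hNN hF)
    ((h F hF).trans (pow_le_pow_of_le_one hp0.le hp1.le hNN))

lemma testLE_add (hp0 : 0 < v (p : K)) (hp1 : v (p : K) < 1)
    {i N : ℕ} (hf : TestLE f i N) (hg : TestLE g i N) : TestLE (f + g) i N := by
  obtain ⟨F, hF⟩ := Submodule.Quotient.mk_surjective _ (f.val N)
  obtain ⟨G, hG⟩ := Submodule.Quotient.mk_surjective _ (g.val N)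
  have hFG : Submodule.Quotient.mk (F + G) = (f + g).val N := by
    rw [AdicCompletion.val_add_apply, ← hF, ← hG]
    rfl
  exact testLE_of_lift hp0 hp1 hFG
    ((ww_add_le v _ F G).trans (max_le (hf F hF) (hg G hG)))

lemma testLE_zero (hp0 : 0 < v (p : K)) (hp1 : v (p : K) < 1) (i N : ℕ) :
    TestLE (0 : AdicCompletion (Iid p v) (AddMonoidAlgebra v.integer (pPowRat p))) i N := by
  refine testLE_of_lift hp0 hp1 (F := 0) ?_ ?_
  · rw [AdicCompletion.val_zero]
    rfl
  · rw [ww_zero]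
    exact zero_le

lemma testLE_mul_left (hp0 : 0 < v (p : K)) (hp1 : v (p : K) < 1)
    {i N : ℕ} (hf : TestLE f i N) : TestLE (g * f) i N := by
  obtain ⟨F, hF⟩ := Submodule.Quotient.mk_surjective _ (f.val N)
  obtain ⟨G, hG⟩ := Submodule.Quotient.mk_surjective _ (g.val N)
  have hFG : Submodule.Quotient.mk (G * F) = (g * f).val N := by
    rw [AdicCompletion.val_mul, ← hF, ← hG]
    rfl
  refine testLE_of_lift hp0 hp1 hFG ?_
  calc ww p v _ (G * F) ≤ ww p v _ G * ww p v _ F := ww_mul_le v (pow_ne_zero _ hp0.ne') G F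
    _ ≤ 1 * (v (p : K)) ^ N := mul_le_mul' (ww_le_one v (pow_le_one' hp1.le _) G) (hf F hF)
    _ = (v (p : K)) ^ N := one_mul _

lemma not_testLE_mul (hp0 : 0 < v (p : K)) (hp1 : v (p : K) < 1)
    {i A B : ℕ} (hf : ¬ TestLE f i A) (hg : ¬ TestLE g i B) :
    ¬ TestLE (f * g) i (A + B) := by
  obtain ⟨F, hF⟩ := Submodule.Quotient.mk_surjective _ (f.val (A + B))
  obtain ⟨G, hG⟩ := Submodule.Quotient.mk_surjective _ (g.val (A + B))
  have hFG : Submodule.Quotient.mk (F * G) = (f * g).val (A + B) := by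
    rw [AdicCompletion.val_mul, ← hF, ← hG]
    rfl
  intro hT
  have hwF := not_testLE_all_lifts hp0 hp1 hf F (lift_lower (Nat.le_add_right A B) hF)
  have hwG := not_testLE_all_lifts hp0 hp1 hg G (lift_lower (Nat.le_add_left B A) hG)
  have hW := hT (F * G) hFG
  have hFne : F ≠ 0 := by
    intro h0
    rw [h0, ww_zero] at hwF
    exact absurd hwF (not_lt.mpr zero_le)
  have hGne : G ≠ 0 := by
    intro h0
    rw [h0, ww_zero] at hwG
    exact absurd hwG (not_lt.mpr zero_le)
  have hlow := ww_mul_ge v (pow_ne_zero i hp0.ne') hFne hGne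
  have hlt : (v (p : K)) ^ (A + B) < ww p v ((v (p : K)) ^ i) F * ww p v ((v (p : K)) ^ i) G := by
    rw [pow_add]
    exact mul_lt_mul'' hwF hwG zero_le zero_le
  exact absurd hW (not_le.mpr (hlt.trans_le hlow))

end Test

section Witness

/-- sparse test points -/
def tauW (j : ℕ) : ℕ := 2 ^ (j * j)

lemma tau_pos (j : ℕ) : 0 < tauW j := Nat.pow_pos (by norm_num)
lemma one_le_tauR (j : ℕ) : (1:ℝ) ≤ (tauW j : ℝ) := by
  have := tau_pos j; exact_mod_cast this
lemma tau_strictMono : StrictMono tauW := by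
  intro a b h
  exact Nat.pow_lt_pow_right (by norm_num) (by nlinarith)
lemma lt_tau_self (k : ℕ) : k < tauW k := by
  calc k < 2 ^ k := Nat.lt_two_pow_self (n := k)
  _ ≤ 2 ^ (k * k) := by
      by_cases hk : k = 0
      · subst hk; norm_num
      · exact Nat.pow_le_pow_right (by norm_num) (Nat.le_mul_of_pos_left k (Nat.pos_of_ne_zero hk))

variable (p) in
/-- denominator exponents -/
noncomputable def ddW (r : ℝ) (j : ℕ) : ℕ := j + ⌈Real.logb p ((tauW j : ℝ) ^ r)⌉₊

/-- coefficient exponents -/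
noncomputable def nnW (r : ℝ) (j : ℕ) : ℕ := j + ⌈((tauW j : ℝ)) ^ (1 - r)⌉₊

lemma nnW_ge (r : ℝ) (j : ℕ) : j ≤ nnW r j := Nat.le_add_right _ _

lemma ddW_strictMono (hpp : 1 < p) {r : ℝ} (hr : 0 ≤ r) : StrictMono (ddW p r) := by
  apply strictMono_nat_of_lt_succ
  intro j
  have hpR : (1:ℝ) < (p:ℝ) := by exact_mod_cast hpp
  have hmono : Real.logb p ((tauW j : ℝ) ^ r) ≤ Real.logb p ((tauW (j+1) : ℝ) ^ r) := by
    apply Real.logb_le_logb_of_le hpR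
      (Real.rpow_pos_of_pos (lt_of_lt_of_le one_pos (one_le_tauR j)) r)
    exact Real.rpow_le_rpow (by positivity)
      (by exact_mod_cast (tau_strictMono (Nat.lt_succ_self j)).le) hr
  have hc := Nat.ceil_le_ceil hmono
  simp only [ddW]
  omega

variable (p) in
noncomputable def qqW (hpp : 1 < p) (r : ℝ) (j : ℕ) : pPowRat p :=
  ⟨1 / (p:ℚ) ^ (ddW p r j), ⟨by positivity, ddW p r j, 1, by
    have : (p:ℚ) ≠ 0 := by positivity
    field_simp
    norm_num⟩⟩

lemma qqW_inj (hpp : 1 < p) {r : ℝ} (hr : 0 ≤ r) : Function.Injective (qqW p hpp r) := by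
  intro a b hab
  have hp1 : (1:ℚ) < (p:ℚ) := by exact_mod_cast hpp
  have h1 : (1:ℚ) / (p:ℚ) ^ (ddW p r a) = 1 / (p:ℚ) ^ (ddW p r b) := congrArg Subtype.val hab
  have h2 : ((p:ℚ)) ^ (ddW p r a) = (p:ℚ) ^ (ddW p r b) := by
    field_simp at h1
    exact_mod_cast h1.symm
  have h3 : ddW p r a = ddW p r b := by
    by_contra hne
    rcases Nat.lt_or_ge (ddW p r a) (ddW p r b) with h | h
    · exact absurd h2 (ne_of_lt (pow_lt_pow_right₀ hp1 h))
    · rcases Nat.lt_or_ge (ddW p r b) (ddW p r a) with h' | h'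
      · exact absurd h2.symm (ne_of_lt (pow_lt_pow_right₀ hp1 h'))
      · omega
  exact (ddW_strictMono hpp hr).injective h3

end Witness

section WitnessElt

variable {v}

lemma cpow_rpow {c : NNReal} (hc : c ≠ 0) (i : ℕ) (x : ℝ) :
    ((c ^ i : NNReal)) ^ (x : ℝ) = c ^ ((i:ℝ) * x) := by
  rw [← NNReal.rpow_natCast c i, ← NNReal.rpow_mul]

lemma cpow_eq_rpow (c : NNReal) (n : ℕ) : (c ^ n : NNReal) = c ^ ((n:ℝ)) :=
  (NNReal.rpow_natCast c n).symm

lemma coe_pow_pO (n : ℕ) : (((p : v.integer) ^ n : v.integer) : K) = (p : K) ^ n := by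
  push_cast; rfl

/-- value of a `p`-power monomial -/
lemma ww_single_val {i n : ℕ} (hp0 : 0 < v (p : K)) (q : pPowRat p) :
    v ((((p : v.integer) ^ n : v.integer)) : K) * ((v (p : K)) ^ i) ^ ((q:ℚ):ℝ)
      = (v (p : K)) ^ ((n : ℝ) + (i:ℝ) * ((q:ℚ):ℝ)) := by
  rw [coe_pow_pO, map_pow, cpow_rpow hp0.ne' i, cpow_eq_rpow,
    ← NNReal.rpow_add hp0.ne']

lemma ww_sum_le {α : Type} {ρ : NNReal} {s : Finset α}
    {F : α → AddMonoidAlgebra v.integer (pPowRat p)} {t : NNReal}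
    (h : ∀ k ∈ s, ww p v ρ (F k) ≤ t) : ww p v ρ (∑ k ∈ s, F k) ≤ t := by
  induction s using Finset.cons_induction with
  | empty => rw [Finset.sum_empty, ww_zero]; exact zero_le
  | cons a s ha ih =>
      rw [Finset.sum_cons]
      refine (ww_add_le v ρ _ _).trans (max_le (h a (Finset.mem_cons_self a s)) ?_)
      exact ih fun k hk => h k (Finset.mem_cons_of_mem hk)

variable (v)

noncomputable def Wpart (hpp : 1 < p) (r : ℝ) (N : ℕ) : AddMonoidAlgebra v.integer (pPowRat p) :=
  ∑ k ∈ Finset.range N, AddMonoidAlgebra.single (qqW p hpp r k) ((p : v.integer) ^ nnW r k)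

lemma single_pN_mem (q : pPowRat p) {n N : ℕ} (hNn : N ≤ n) :
    AddMonoidAlgebra.single q ((p : v.integer) ^ n) ∈ (Iid p v) ^ N := by
  rw [Iid, Ideal.span_singleton_pow, Ideal.mem_span_singleton]
  refine ⟨AddMonoidAlgebra.single q ((p : v.integer) ^ (n - N)), ?_⟩
  rw [algebraMap_eq_single, AddMonoidAlgebra.single_pow, AddMonoidAlgebra.single_mul_single]
  congr 1
  · simp
  · rw [← pow_add]; congr 1; omega

lemma Wpart_diff_mem (hpp : 1 < p) (r : ℝ) {m n : ℕ} (hmn : m ≤ n) :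
    Wpart v hpp r n - Wpart v hpp r m ∈ (Iid p v) ^ m := by
  rw [Wpart, Wpart, ← Finset.sum_Ico_eq_sub _ hmn]
  refine Ideal.sum_mem _ fun k hk => ?_
  refine single_pN_mem v _ ?_
  have := nnW_ge r k
  have := (Finset.mem_Ico.mp hk).1
  omega

noncomputable def witW (hpp : 1 < p) (r : ℝ) :
    AdicCompletion (Iid p v) (AddMonoidAlgebra v.integer (pPowRat p)) := by
  refine ⟨fun N => Submodule.Quotient.mk (Wpart v hpp r N), ?_⟩
  intro m n hmn
  show AdicCompletion.transitionMap (Iid p v) _ hmn (Submodule.Quotient.mk (Wpart v hpp r n))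
      = Submodule.Quotient.mk (Wpart v hpp r m)
  change Submodule.Quotient.mk (Wpart v hpp r n) = _
  rw [Submodule.Quotient.eq, smul_top_eq]
  exact Wpart_diff_mem v hpp r hmn

lemma witW_val (hpp : 1 < p) (r : ℝ) (N : ℕ) :
    (witW v hpp r).val N = Submodule.Quotient.mk (Wpart v hpp r N) := rfl

lemma Wpart_coeff (hpp : 1 < p) {r : ℝ} (hr : 0 ≤ r) {j N : ℕ} (hj : j < N) :
    (Wpart v hpp r N).coeff (qqW p hpp r j) = (p : v.integer) ^ (nnW r j) := by
  rw [Wpart, AddMonoidAlgebra.coeff_sum, Finsupp.finset_sum_apply]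
  rw [Finset.sum_eq_single_of_mem j (Finset.mem_range.mpr hj)]
  · rw [AddMonoidAlgebra.coeff_single, Finsupp.single_eq_same]
  · intro k hk hkj
    rw [AddMonoidAlgebra.coeff_single]; exact Finsupp.single_eq_of_ne' (fun h => hkj (qqW_inj hpp hr h))

lemma Wpart_ww_le (hpp : 1 < p) (hp0 : 0 < v (p : K)) (hp1 : v (p : K) < 1)
    {r : ℝ} {i N : ℕ}
    (h : ∀ k, k < N → (N:ℝ) ≤ (nnW r k : ℝ) + (i:ℝ) * ((qqW p hpp r k : ℚ) : ℝ)) :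
    ww p v ((v (p : K)) ^ i) (Wpart v hpp r N) ≤ (v (p : K)) ^ N := by
  rw [Wpart]
  refine ww_sum_le fun k hk => ?_
  refine (ww_single_le v _ _ _).trans ?_
  rw [ww_single_val hp0]
  rw [cpow_eq_rpow]
  exact NNReal.rpow_le_rpow_of_exponent_ge hp0 hp1.le (h k (Finset.mem_range.mp hk))

lemma Wpart_ww_ge (hpp : 1 < p) (hp0 : 0 < v (p : K))
    {r : ℝ} (hr : 0 ≤ r) {i j N : ℕ} (hj : j < N) :
    (v (p : K)) ^ ((nnW r j : ℝ) + (i:ℝ) * ((qqW p hpp r j : ℚ) : ℝ))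
      ≤ ww p v ((v (p : K)) ^ i) (Wpart v hpp r N) := by
  have := ww_term_le v ((v (p : K)) ^ i) (Wpart v hpp r N) (qqW p hpp r j)
  rwa [Wpart_coeff v hpp hr hj, ww_single_val hp0] at this

end WitnessElt

section Asymit
open Filter Real

lemma tauR_rpow (j : ℕ) (a : ℝ) :
    ((tauW j : ℝ)) ^ a = (2:ℝ) ^ (a * ((j:ℝ) * (j:ℝ))) := by
  have h1 : ((tauW j : ℝ)) = (2:ℝ) ^ (((j * j : ℕ)):ℝ) := by
    rw [rpow_natCast]
    push_cast [tauW]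
    ring
  rw [h1, ← rpow_mul (by norm_num), mul_comm]
  push_cast
  ring_nf

lemma nat_lt_two_rpow (j : ℕ) : (j:ℝ) + 1 ≤ (2:ℝ) ^ ((j:ℝ)) := by
  have := Nat.lt_two_pow_self (n := j)
  have h2 : ((j:ℕ):ℝ) + 1 ≤ ((2^j : ℕ):ℝ) := by exact_mod_cast this
  rwa [Nat.cast_pow, Nat.cast_ofNat, ← rpow_natCast (2:ℝ) j] at h2

/-- P1 -/
lemma evtl_P1 {a b : ℝ} (ha : 0 < a) (hab : a < b) :
    ∀ᶠ j : ℕ in atTop, (j:ℝ) + 1 + 2 * (tauW j : ℝ) ^ a < (tauW j : ℝ) ^ b := by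
  have h1 : ∀ᶠ j : ℕ in atTop, (1/a : ℝ) ≤ (j:ℝ) :=
    tendsto_natCast_atTop_atTop.eventually_ge_atTop _
  have h2 : ∀ᶠ j : ℕ in atTop, (3/(b-a) : ℝ) ≤ (j:ℝ) :=
    tendsto_natCast_atTop_atTop.eventually_ge_atTop _
  have h3 : ∀ᶠ j : ℕ in atTop, (1 : ℝ) ≤ (j:ℝ) :=
    tendsto_natCast_atTop_atTop.eventually_ge_atTop _
  filter_upwards [h1, h2, h3] with j hj1 hj2 hj3
  rw [tauR_rpow, tauR_rpow]
  set s : ℝ := (j:ℝ) * (j:ℝ) with hs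
  have hjs : (j:ℝ) ≤ a * s := by
    rw [hs]
    have : 1 ≤ a * (j:ℝ) := by
      rw [div_le_iff₀ ha] at hj1
      linarith [hj1]
    nlinarith
  have hj2p : (j:ℝ) + 1 ≤ (2:ℝ) ^ (a * s) :=
    (nat_lt_two_rpow j).trans (rpow_le_rpow_of_exponent_le (by norm_num) hjs)
  have hfin : a * s + 2 < b * s := by
    have : (3:ℝ) ≤ (b - a) * (j:ℝ) := by
      rw [div_le_iff₀ (by linarith)] at hj2
      linarith
    nlinarith
  calc (j:ℝ) + 1 + 2 * (2:ℝ) ^ (a * s)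
      ≤ (2:ℝ) ^ (a*s) + 2 * (2:ℝ) ^ (a*s) := by linarith
    _ ≤ (2:ℝ) ^ (a*s) * 4 := by nlinarith [rpow_pos_of_pos (show (0:ℝ) < 2 by norm_num) (a*s)]
    _ = (2:ℝ) ^ (a*s + 2) := by
        rw [rpow_add (by norm_num : (0:ℝ) < 2)]
        norm_num
    _ < (2:ℝ) ^ (b*s) := rpow_lt_rpow_of_exponent_lt (by norm_num) hfin

/-- P2 -/
lemma evtl_P2 {x y : ℝ} (hx : 0 ≤ x) (hxy : x < y) (n : ℕ) :
    ∀ᶠ i : ℕ in atTop, (n:ℝ) * ((i:ℝ) ^ x + 1) ≤ (i:ℝ) ^ y := by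
  have ht : Tendsto (fun i : ℕ => ((i:ℝ)) ^ (y - x)) atTop atTop :=
    (tendsto_rpow_atTop (by linarith)).comp tendsto_natCast_atTop_atTop
  have h1 := ht.eventually_ge_atTop ((2:ℝ) * n)
  have h3 : ∀ᶠ i : ℕ in atTop, (1 : ℝ) ≤ (i:ℝ) :=
    tendsto_natCast_atTop_atTop.eventually_ge_atTop _
  filter_upwards [h1, h3] with i hi1 hi3
  have hipos : (0:ℝ) < (i:ℝ) := by linarith
  have hx1 : (1:ℝ) ≤ (i:ℝ) ^ x := Real.one_le_rpow hi3 hx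
  have hsplit : (i:ℝ) ^ y = (i:ℝ) ^ x * (i:ℝ) ^ (y - x) := by
    rw [← rpow_add hipos]; ring_nf
  rw [hsplit]
  have hxpos : (0:ℝ) < (i:ℝ) ^ x := by positivity
  nlinarith [hi1]

/-- P3 -/
lemma evtl_P3 (p : ℕ) (C : ℝ) {δ : ℝ} (hδ : 0 < δ) :
    ∀ᶠ j : ℕ in atTop, C * (p:ℝ) ^ (j+1) ≤ (tauW j : ℝ) ^ δ := by
  have h1 : ∀ᶠ j : ℕ in atTop, ((⌈C⌉₊ + p * (j+1) : ℕ) : ℝ) ≤ δ * ((j:ℝ) * (j:ℝ)) := by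
    have h2 : ∀ᶠ j : ℕ in atTop, ((⌈C⌉₊ + p : ℕ) : ℝ) * 2 / δ ≤ (j:ℝ) :=
      tendsto_natCast_atTop_atTop.eventually_ge_atTop _
    have h3 : ∀ᶠ j : ℕ in atTop, (1:ℝ) ≤ (j:ℝ) :=
      tendsto_natCast_atTop_atTop.eventually_ge_atTop _
    filter_upwards [h2, h3] with j hj2 hj3
    rw [div_le_iff₀ hδ] at hj2
    push_cast
    push_cast at hj2
    nlinarith
  filter_upwards [h1] with j hj
  rw [tauR_rpow]
  calc C * (p:ℝ) ^ (j+1)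
      ≤ ((2:ℝ) ^ (⌈C⌉₊ : ℕ)) * ((2:ℝ) ^ (p : ℕ)) ^ (j+1) := by
        refine mul_le_mul ?_ ?_ (by positivity) (by positivity)
        · calc C ≤ (⌈C⌉₊ : ℝ) := Nat.le_ceil C
            _ ≤ (2:ℝ) ^ (⌈C⌉₊ : ℕ) := by
                have := Nat.lt_two_pow_self (n := ⌈C⌉₊)
                exact_mod_cast this.le
        · refine pow_le_pow_left₀ (by positivity) ?_ _
          have := Nat.lt_two_pow_self (n := p)
          exact_mod_cast this.le
    _ = (2:ℝ) ^ ((⌈C⌉₊ + p * (j+1) : ℕ)) := by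
        rw [← pow_mul, ← pow_add]
    _ = (2:ℝ) ^ (((⌈C⌉₊ + p * (j+1) : ℕ)) : ℝ) := (rpow_natCast _ _).symm
    _ ≤ (2:ℝ) ^ (δ * ((j:ℝ) * (j:ℝ))) := rpow_le_rpow_of_exponent_le (by norm_num) hj

end Asymit

section Bounds
open Real Filter

variable {p : ℕ} {K : Type} [Field K] {v : Valuation K NNReal}

lemma qqR_eq (hpp : 1 < p) (r : ℝ) (j : ℕ) :
    ((qqW p hpp r j : ℚ) : ℝ) = ((p:ℝ) ^ (ddW p r j))⁻¹ := by
  show (((1 / (p:ℚ) ^ (ddW p r j)) : ℚ) : ℝ) = _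
  push_cast
  ring

lemma qqR_nonneg (hpp : 1 < p) (r : ℝ) (j : ℕ) : 0 ≤ ((qqW p hpp r j : ℚ) : ℝ) := by
  rw [qqR_eq]
  positivity

lemma tau_rpow_pos (a : ℝ) (j : ℕ) : (0:ℝ) < (tauW j : ℝ) ^ a :=
  rpow_pos_of_pos (lt_of_lt_of_le one_pos (one_le_tauR j)) a

lemma B1 (hpp : 1 < p) {r : ℝ} (j : ℕ) :
    (tauW j : ℝ) ^ r ≤ (p:ℝ) ^ (ddW p r j) := by
  have hp1R : (1:ℝ) < (p:ℝ) := by exact_mod_cast hpp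
  have htr := tau_rpow_pos r j
  calc (tauW j : ℝ) ^ r = (p:ℝ) ^ (Real.logb p ((tauW j : ℝ) ^ r)) :=
        (Real.rpow_logb (by linarith) (ne_of_gt hp1R) htr).symm
    _ ≤ (p:ℝ) ^ ((⌈Real.logb p ((tauW j : ℝ) ^ r)⌉₊ : ℝ)) :=
        rpow_le_rpow_of_exponent_le hp1R.le (Nat.le_ceil _)
    _ ≤ (p:ℝ) ^ ((ddW p r j : ℕ) : ℝ) := by
        refine rpow_le_rpow_of_exponent_le hp1R.le ?_
        have : (⌈Real.logb p ((tauW j : ℝ) ^ r)⌉₊ : ℕ) ≤ ddW p r j := Nat.le_add_left _ _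
        exact_mod_cast this
    _ = (p:ℝ) ^ (ddW p r j) := rpow_natCast _ _

lemma B2 (hpp : 1 < p) {r : ℝ} (hr : 0 ≤ r) (j : ℕ) :
    (p:ℝ) ^ (ddW p r j) ≤ (p:ℝ) ^ (j+1) * (tauW j : ℝ) ^ r := by
  have hp1R : (1:ℝ) < (p:ℝ) := by exact_mod_cast hpp
  have hp0R : (0:ℝ) < (p:ℝ) := by linarith
  have hx0 : 0 ≤ Real.logb p ((tauW j : ℝ) ^ r) := by
    apply Real.logb_nonneg hp1R
    calc (1:ℝ) = (tauW j : ℝ) ^ (0:ℝ) := (rpow_zero _).symm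
      _ ≤ (tauW j : ℝ) ^ r := rpow_le_rpow_of_exponent_le (one_le_tauR j) hr
  have hsplit : (p:ℝ) ^ (ddW p r j) = (p:ℝ)^j * (p:ℝ)^(⌈Real.logb p ((tauW j : ℝ) ^ r)⌉₊ : ℕ) := by
    rw [ddW, pow_add]
  rw [hsplit]
  have hceil : ((⌈Real.logb p ((tauW j : ℝ) ^ r)⌉₊ : ℕ) : ℝ) ≤ Real.logb p ((tauW j : ℝ) ^ r) + 1 :=
    (Nat.ceil_lt_add_one hx0).le
  have h2 : (p:ℝ)^(⌈Real.logb p ((tauW j : ℝ) ^ r)⌉₊ : ℕ) ≤ (tauW j : ℝ) ^ r * (p:ℝ) := by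
    calc (p:ℝ)^(⌈Real.logb p ((tauW j : ℝ) ^ r)⌉₊ : ℕ)
        = (p:ℝ) ^ ((⌈Real.logb p ((tauW j : ℝ) ^ r)⌉₊ : ℕ) : ℝ) := (rpow_natCast _ _).symm
      _ ≤ (p:ℝ) ^ (Real.logb p ((tauW j : ℝ) ^ r) + 1) :=
          rpow_le_rpow_of_exponent_le hp1R.le hceil
      _ = (p:ℝ) ^ (Real.logb p ((tauW j : ℝ) ^ r)) * (p:ℝ) := by
          rw [rpow_add hp0R, rpow_one]
      _ = (tauW j : ℝ) ^ r * (p:ℝ) := by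
          rw [Real.rpow_logb hp0R (ne_of_gt hp1R) (tau_rpow_pos r j)]
  calc (p:ℝ)^j * (p:ℝ)^(⌈Real.logb p ((tauW j : ℝ) ^ r)⌉₊ : ℕ)
      ≤ (p:ℝ)^j * ((tauW j : ℝ) ^ r * (p:ℝ)) := by
        refine mul_le_mul_of_nonneg_left h2 (by positivity)
    _ = (p:ℝ) ^ (j+1) * (tauW j : ℝ) ^ r := by ring

lemma B3a (r : ℝ) (j : ℕ) : (tauW j : ℝ) ^ (1 - r) ≤ (nnW r j : ℝ) := by
  calc (tauW j : ℝ) ^ (1 - r) ≤ (⌈(tauW j : ℝ) ^ (1 - r)⌉₊ : ℝ) := Nat.le_ceil _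
    _ ≤ (nnW r j : ℝ) := by
        have : (⌈(tauW j : ℝ) ^ (1 - r)⌉₊ : ℕ) ≤ nnW r j := Nat.le_add_left _ _
        exact_mod_cast this

lemma B3b (r : ℝ) (j : ℕ) : (nnW r j : ℝ) ≤ (j:ℝ) + (tauW j : ℝ) ^ (1 - r) + 1 := by
  have h := (Nat.ceil_lt_add_one (le_of_lt (tau_rpow_pos (1-r) j))).le
  have : (nnW r j : ℝ) = (j:ℝ) + (⌈(tauW j : ℝ) ^ (1 - r)⌉₊ : ℝ) := by
    rw [nnW]; push_cast; ring
  rw [this]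
  linarith

/-- E1 : eventual bound for non-membership -/
lemma E1 (hpp : 1 < p) {l r : ℝ} (hl : 0 < l) (hlr : l < r) (hr1 : r < 1) :
    ∀ᶠ j : ℕ in atTop,
      ((nnW r j : ℝ) + (tauW j : ℝ) * ((qqW p hpp r j : ℚ):ℝ) < (⌈(tauW j : ℝ)^(1-l)⌉₊ : ℝ))
      ∧ j < ⌈(tauW j : ℝ)^(1-l)⌉₊ := by
  filter_upwards [evtl_P1 (a := 1-r) (b := 1-l) (by linarith) (by linarith)] with j hj
  have htpos : (0:ℝ) < (tauW j : ℝ) := lt_of_lt_of_le one_pos (one_le_tauR j)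
  have hq : (tauW j : ℝ) * ((qqW p hpp r j : ℚ):ℝ) ≤ (tauW j : ℝ) ^ (1-r) := by
    rw [qqR_eq]
    have h1 : ((p:ℝ) ^ (ddW p r j))⁻¹ ≤ ((tauW j : ℝ) ^ r)⁻¹ :=
      inv_anti₀ (tau_rpow_pos r j) (B1 hpp j)
    calc (tauW j : ℝ) * ((p:ℝ) ^ (ddW p r j))⁻¹ ≤ (tauW j : ℝ) * ((tauW j : ℝ) ^ r)⁻¹ :=
          mul_le_mul_of_nonneg_left h1 htpos.le
      _ = (tauW j : ℝ) ^ (1-r) := by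
          rw [Real.rpow_sub htpos, rpow_one]
          ring
  have hnn := B3b r j
  have hle : (nnW r j : ℝ) + (tauW j : ℝ) * ((qqW p hpp r j : ℚ):ℝ)
      ≤ (j:ℝ) + 1 + 2 * (tauW j : ℝ) ^ (1-r) := by linarith
  have hfin : (nnW r j : ℝ) + (tauW j : ℝ) * ((qqW p hpp r j : ℚ):ℝ) < (tauW j : ℝ)^(1-l) :=
    lt_of_le_of_lt hle hj
  constructor
  · exact lt_of_lt_of_le hfin (Nat.le_ceil _)
  · have hj2 : (j:ℝ) < (tauW j : ℝ)^(1-l) := by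
      have := qqR_nonneg hpp r j
      have hnn0 : (0:ℝ) ≤ (nnW r j : ℝ) := by positivity
      nlinarith [mul_nonneg htpos.le (qqR_nonneg hpp r j)]
    have : (j:ℝ) < (⌈(tauW j : ℝ)^(1-l)⌉₊ : ℝ) := lt_of_lt_of_le hj2 (Nat.le_ceil _)
    exact_mod_cast this

end Bounds

section E2sec
open Real Filter

variable {p : ℕ} {K : Type} [Field K] {v : Valuation K NNReal}

/-- E2 : eventual bound for membership -/
lemma E2 (hpp : 1 < p) {m r : ℝ} (hr0 : 0 < r) (hrm : r < m) (hm1 : m < 1) (n : ℕ) :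
    ∀ᶠ i : ℕ in atTop, ∀ k, k < n * ⌈(i:ℝ)^(1-m)⌉₊ →
      ((n * ⌈(i:ℝ)^(1-m)⌉₊ : ℕ) : ℝ) ≤ (nnW r k : ℝ) + (i:ℝ) * ((qqW p hpp r k : ℚ):ℝ) := by
  have hp1R : (1:ℝ) < (p:ℝ) := by exact_mod_cast hpp
  -- choose thresholds
  obtain ⟨J0, hJ0⟩ := eventually_atTop.mp
    (evtl_P3 p ((2*n : ℕ):ℝ) (show (0:ℝ) < m - r by linarith))
  obtain ⟨I0, hI0⟩ := eventually_atTop.mp (evtl_P2 (x := 1-m) (y := 1-r)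
    (by linarith) (by linarith) n)
  rw [eventually_atTop]
  refine ⟨max (tauW J0) (max I0 1), fun i hi => ?_⟩
  have hiI0 : I0 ≤ i := le_trans (le_max_left _ _) (le_trans (le_max_right _ _) hi)
  have hi1 : 1 ≤ i := le_trans (le_max_right _ _) (le_trans (le_max_right _ _) hi)
  have hitau : tauW J0 ≤ i := le_trans (le_max_left _ _) hi
  have hiR1 : (1:ℝ) ≤ (i:ℝ) := by exact_mod_cast hi1
  have hiRpos : (0:ℝ) < (i:ℝ) := by linarith
  -- the scale index
  set j := Nat.findGreatest (fun a => tauW a ≤ i) i with hjdef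
  have hP0 : tauW 0 ≤ i := by simpa [tauW] using hi1
  have htaui : tauW j ≤ i := Nat.findGreatest_spec (P := fun a => tauW a ≤ i) (Nat.zero_le i) hP0
  have hjJ0 : J0 ≤ j := Nat.le_findGreatest (P := fun a => tauW a ≤ i) (le_trans (lt_tau_self J0).le hitau) hitau
  have hilt : i < tauW (j+1) := by
    by_cases hc : j + 1 ≤ i
    · have hng := Nat.findGreatest_is_greatest (P := fun a => tauW a ≤ i)
        (n := i) (k := j + 1) (Nat.lt_succ_self j) hc
      omega
    · have h1 : i < j + 1 := by omega
      exact lt_of_lt_of_le h1 (lt_tau_self (j+1)).le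
  -- main bound with K
  intro k hk
  set KN := n * ⌈(i:ℝ)^(1-m)⌉₊ with hKN
  have hKR : ((KN : ℕ) : ℝ) ≤ (n:ℝ) * ((i:ℝ)^(1-m) + 1) := by
    rw [hKN]
    push_cast
    have := (Nat.ceil_lt_add_one (le_of_lt (rpow_pos_of_pos hiRpos (1-m)))).le
    nlinarith [(by positivity : (0:ℝ) ≤ (n:ℝ))]
  have hxm1 : (1:ℝ) ≤ (i:ℝ)^(1-m) := Real.one_le_rpow hiR1 (by linarith)
  have hKR2 : ((KN : ℕ) : ℝ) ≤ (2*n : ℕ) * (i:ℝ)^(1-m) := by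
    push_cast
    nlinarith [(by positivity : (0:ℝ) ≤ (n:ℝ))]
  rcases Nat.lt_or_ge j k with hcase | hcase
  · -- k ≥ j+1 : coefficient huge
    have hk1 : j + 1 ≤ k := hcase
    have h1 : (i:ℝ) ≤ (tauW (j+1) : ℝ) := by exact_mod_cast hilt.le
    have h2 : (tauW (j+1) : ℝ) ≤ (tauW k : ℝ) := by exact_mod_cast tau_strictMono.monotone hk1
    have h3 : (i:ℝ)^(1-r) ≤ (tauW k : ℝ)^(1-r) :=
      Real.rpow_le_rpow hiRpos.le (le_trans h1 h2) (by linarith)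
    have h4 := hI0 i hiI0
    have h5 := B3a r k
    have hq0 : 0 ≤ (i:ℝ) * ((qqW p hpp r k : ℚ):ℝ) :=
      mul_nonneg hiRpos.le (qqR_nonneg hpp r k)
    have : ((KN : ℕ) : ℝ) ≤ (nnW r k : ℝ) := by
      calc ((KN : ℕ) : ℝ) ≤ (n:ℝ) * ((i:ℝ)^(1-m) + 1) := hKR
        _ ≤ (i:ℝ)^(1-r) := h4
        _ ≤ (tauW k : ℝ)^(1-r) := h3
        _ ≤ (nnW r k : ℝ) := h5
    linarith
  · -- k ≤ j : monomial exponent small, i large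
    have hD : (p:ℝ) ^ (ddW p r k) ≤ (p:ℝ)^(j+1) * (tauW j : ℝ)^r := by
      calc (p:ℝ) ^ (ddW p r k) ≤ (p:ℝ)^(k+1) * (tauW k : ℝ)^r := B2 hpp hr0.le k
        _ ≤ (p:ℝ)^(j+1) * (tauW j : ℝ)^r := by
            have h1 : (p:ℝ)^(k+1) ≤ (p:ℝ)^(j+1) :=
              pow_le_pow_right₀ (by linarith) (by omega)
            have h2 : (tauW k : ℝ)^r ≤ (tauW j : ℝ)^r := by
              apply Real.rpow_le_rpow (by positivity) ?_ hr0.le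
              exact_mod_cast tau_strictMono.monotone hcase
            have hpos1 : (0:ℝ) ≤ (p:ℝ)^(k+1) := by positivity
            have hpos2 : (0:ℝ) ≤ (tauW j : ℝ)^r := (tau_rpow_pos r j).le
            nlinarith [tau_rpow_pos r k]
    set D : ℝ := (p:ℝ)^(j+1) * (tauW j : ℝ)^r with hDdef
    have hDpos : 0 < D := by
      rw [hDdef]
      have := tau_rpow_pos r j
      positivity
    have hqD : D⁻¹ ≤ ((qqW p hpp r k : ℚ):ℝ) := by
      rw [qqR_eq]
      exact inv_anti₀ (by positivity) hD
    -- 2n * p^{j+1} * tau_j^r ≤ tau_j^{m-r} * tau_j^r = tau_j^m ≤ i^m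
    have hE2b := hJ0 j hjJ0
    have htjm : (tauW j : ℝ)^(m-r) * (tauW j : ℝ)^r = (tauW j : ℝ)^m := by
      rw [← Real.rpow_add (lt_of_lt_of_le one_pos (one_le_tauR j))]
      ring_nf
    have him : (tauW j : ℝ)^m ≤ (i:ℝ)^m := by
      apply Real.rpow_le_rpow (by positivity) ?_ (by linarith)
      exact_mod_cast htaui
    have hcore : ((2*n : ℕ):ℝ) * D ≤ (i:ℝ)^m := by
      rw [hDdef]
      calc ((2*n : ℕ):ℝ) * ((p:ℝ)^(j+1) * (tauW j : ℝ)^r)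
          = (((2*n : ℕ):ℝ) * (p:ℝ)^(j+1)) * (tauW j : ℝ)^r := by ring
        _ ≤ (tauW j : ℝ)^(m-r) * (tauW j : ℝ)^r :=
            mul_le_mul_of_nonneg_right hE2b (tau_rpow_pos r j).le
        _ = (tauW j : ℝ)^m := htjm
        _ ≤ (i:ℝ)^m := him
    -- conclude : KN ≤ i * qq k
    have hsplit : (i:ℝ)^(1-m) * (i:ℝ)^m = (i:ℝ) := by
      rw [← Real.rpow_add hiRpos, show (1-m)+m = (1:ℝ) by ring, Real.rpow_one]
    have hfinal : ((KN : ℕ) : ℝ) ≤ (i:ℝ) * D⁻¹ := by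
      rw [le_mul_inv_iff₀ hDpos]
      calc ((KN : ℕ) : ℝ) * D ≤ ((2*n:ℕ) * (i:ℝ)^(1-m)) * D :=
            mul_le_mul_of_nonneg_right hKR2 hDpos.le
        _ = (i:ℝ)^(1-m) * (((2*n:ℕ):ℝ) * D) := by ring
        _ ≤ (i:ℝ)^(1-m) * (i:ℝ)^m :=
            mul_le_mul_of_nonneg_left hcore (by positivity)
        _ = (i:ℝ) := hsplit
    have hnn0 : (0:ℝ) ≤ (nnW r k : ℝ) := by positivity
    have : (i:ℝ) * D⁻¹ ≤ (i:ℝ) * ((qqW p hpp r k : ℚ):ℝ) :=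
      mul_le_mul_of_nonneg_left hqD hiRpos.le
    linarith

end E2sec

open Filter in
theorem main_thm
    (p : ℕ) (hp : p.Prime) (K : Type) [Field K] [CharZero K]
    (v : Valuation K NNReal)
    (hp0 : 0 < v (p : K)) (hp1 : v (p : K) < 1) :
    ∃ P : Set.Ioo (0 : ℝ) 1 →
        Ideal (AdicCompletion
          (Ideal.span {algebraMap v.integer
            (AddMonoidAlgebra v.integer (pPowRat p)) (p : v.integer)})
          (AddMonoidAlgebra v.integer (pPowRat p))),
      (∀ l, (P l).IsPrime) ∧
      ∀ l m : Set.Ioo (0 : ℝ) 1, (l : ℝ) < (m : ℝ) → P l < P m := by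
  classical
  have hpp : 1 < p := hp.one_lt
  -- the ultrafilter
  have hTinf : (Set.range tauW).Infinite :=
    Set.infinite_range_of_injective tau_strictMono.injective
  have hne : (Filter.cofinite ⊓ Filter.principal (Set.range tauW)).NeBot :=
    hTinf.cofinite_inf_principal_neBot
  set U : Ultrafilter ℕ := Ultrafilter.of (Filter.cofinite ⊓ Filter.principal (Set.range tauW))
    with hUdef
  have hUle : (U : Filter ℕ) ≤ Filter.cofinite ⊓ Filter.principal (Set.range tauW) :=
    Ultrafilter.of_le _
  have hUcof : ∀ {s : Set ℕ}, s ∈ Filter.cofinite → s ∈ U := fun hs =>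
    hUle (Filter.mem_inf_of_left hs)
  have hUT : Set.range tauW ∈ U :=
    hUle (Filter.mem_inf_of_right (Filter.mem_principal_self _))
  have hone : {i : ℕ | 1 ≤ i} ∈ U := by
    refine hUcof ?_
    rw [Filter.mem_cofinite]
    refine (Set.finite_singleton 0).subset fun x hx => ?_
    simp only [Set.mem_compl_iff, Set.mem_setOf_eq, not_le, Nat.lt_one_iff] at hx
    simp [hx]
  -- the ideals
  refine ⟨fun l => {
    carrier := {f | ∀ n : ℕ,
      {i : ℕ | TestLE f i (n * ⌈(i:ℝ) ^ (1 - (l:ℝ))⌉₊)} ∈ U}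
    zero_mem' := fun n => Filter.mem_of_superset Filter.univ_mem
      (fun i _ => testLE_zero hp0 hp1 _ _)
    add_mem' := fun {a b} ha hb n => Filter.mem_of_superset
      (Filter.inter_mem (ha n) (hb n))
      (fun i hi => testLE_add hp0 hp1 hi.1 hi.2)
    smul_mem' := fun cc f hf n => Filter.mem_of_superset (hf n)
      (fun i hi => by
        rw [smul_eq_mul]
        exact testLE_mul_left hp0 hp1 hi) }, fun l => ?_, fun l m hlm => ?_⟩
  · -- prime
    constructor
    · -- ne_top
      intro hTop
      have h1mem : (1 : AdicCompletion (Iid p v) (AddMonoidAlgebra v.integer (pPowRat p)))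
          ∈ (⊤ : Ideal _) := trivial
      replace h1mem := (Ideal.eq_top_iff_one _).mp hTop
      have hs := h1mem 1
      have hint := Filter.inter_mem hs hone
      obtain ⟨i, hiT, hi1⟩ := Filter.nonempty_of_mem hint
      have hipos : (0:ℝ) < (i:ℝ) := by exact_mod_cast hi1
      have hN1 : 1 ≤ 1 * ⌈(i:ℝ) ^ (1 - (l:ℝ))⌉₊ := by
        rw [one_mul]
        exact Nat.ceil_pos.mpr (Real.rpow_pos_of_pos hipos _)
      have hlift : Submodule.Quotient.mk (1 : AddMonoidAlgebra v.integer (pPowRat p))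
          = (1 : AdicCompletion (Iid p v) _).val (1 * ⌈(i:ℝ) ^ (1 - (l:ℝ))⌉₊) := rfl
      have hle := hiT _ hlift
      have hge : (1 : NNReal) ≤ ww p v ((v (p : K)) ^ i)
          (1 : AddMonoidAlgebra v.integer (pPowRat p)) := by
        have h := ww_single_ge v ((v (p : K)) ^ i) (0 : pPowRat p) (1 : v.integer)
        have h0 : (((0 : pPowRat p) : ℚ) : ℝ) = 0 := by norm_cast
        rw [h0, NNReal.rpow_zero, mul_one] at h
        simpa [AddMonoidAlgebra.one_def] using h
      have hlt : (v (p : K)) ^ (1 * ⌈(i:ℝ) ^ (1 - (l:ℝ))⌉₊) < 1 :=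
        pow_lt_one₀ zero_le hp1 (by omega)
      exact absurd (hge.trans hle) (not_le.mpr hlt)
    · -- mem_or_mem
      intro x y hxy
      rw [or_iff_not_imp_left]
      intro hx
      simp only [Submodule.mem_mk, AddSubmonoid.mem_mk, AddSubsemigroup.mem_mk,
        Set.mem_setOf_eq] at hx hxy ⊢
      push_neg at hx
      obtain ⟨nf, hnf⟩ := hx
      have hAc : {i : ℕ | TestLE x i (nf * ⌈(i:ℝ) ^ (1 - (l:ℝ))⌉₊)}ᶜ ∈ U :=
        Ultrafilter.compl_mem_iff_notMem.mpr hnf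
      intro n
      refine Filter.mem_of_superset (Filter.inter_mem (hxy (n + nf)) hAc)
        (fun i hi => ?_)
      obtain ⟨h1, h2⟩ := hi
      by_contra hTy
      have h2' : ¬ TestLE x i (nf * ⌈(i:ℝ) ^ (1 - (l:ℝ))⌉₊) := h2
      have hmul := not_testLE_mul hp0 hp1 h2' hTy
      have heq : nf * ⌈(i:ℝ) ^ (1 - (l:ℝ))⌉₊ + n * ⌈(i:ℝ) ^ (1 - (l:ℝ))⌉₊
          = (n + nf) * ⌈(i:ℝ) ^ (1 - (l:ℝ))⌉₊ := by ring
      rw [heq] at hmul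
      exact hmul h1
  · -- strict chain
    obtain ⟨hl0, hl1⟩ := l.2
    obtain ⟨hm0, hm1⟩ := m.2
    set r : ℝ := ((l:ℝ) + (m:ℝ))/2 with hrdef
    have hr0 : 0 < r := by rw [hrdef]; linarith
    have hlr : (l:ℝ) < r := by rw [hrdef]; linarith
    have hrm : r < (m:ℝ) := by rw [hrdef]; linarith
    have hr1 : r < 1 := by rw [hrdef]; linarith
    have hle : ∀ f : AdicCompletion (Iid p v) (AddMonoidAlgebra v.integer (pPowRat p)), (∀ n : ℕ, {i : ℕ | TestLE f i (n * ⌈(i:ℝ) ^ (1 - (l:ℝ))⌉₊)} ∈ U)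
        → (∀ n : ℕ, {i : ℕ | TestLE f i (n * ⌈(i:ℝ) ^ (1 - (m:ℝ))⌉₊)} ∈ U) := by
      intro f hf n
      refine Filter.mem_of_superset (Filter.inter_mem (hf n) hone) (fun i hi => ?_)
      obtain ⟨h1, h2⟩ := hi
      have hi1R : (1:ℝ) ≤ (i:ℝ) := by exact_mod_cast h2
      refine testLE_mono hp0 hp1 ?_ h1
      refine Nat.mul_le_mul_left n (Nat.ceil_le_ceil ?_)
      exact Real.rpow_le_rpow_of_exponent_le hi1R (by linarith)
    -- the witness
    set w := witW v hpp r with hwdef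
    have hwm : ∀ n : ℕ, {i : ℕ | TestLE w i (n * ⌈(i:ℝ) ^ (1 - (m:ℝ))⌉₊)} ∈ U := by
      intro n
      have hev := E2 hpp hr0 hrm hm1 n
      rw [← Nat.cofinite_eq_atTop] at hev
      refine Filter.mem_of_superset (hUcof hev) (fun i hi => ?_)
      exact testLE_of_lift hp0 hp1 (witW_val v hpp r _)
        (Wpart_ww_le v hpp hp0 hp1 (fun k hk => hi k hk))
    have hwl : ¬ (∀ n : ℕ, {i : ℕ | TestLE w i (n * ⌈(i:ℝ) ^ (1 - (l:ℝ))⌉₊)} ∈ U) := by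
      intro hw
      have hs := hw 1
      obtain ⟨J1, hJ1⟩ := eventually_atTop.mp (E1 hpp hl0 hlr hr1)
      have hX : Set.range tauW ∩ {i : ℕ | tauW J1 ≤ i} ∈ U :=
        Filter.inter_mem hUT (hUcof (by
          rw [Filter.mem_cofinite]
          refine (Set.finite_Iio (tauW J1)).subset fun x hx => ?_
          simpa using hx))
      have hint := Filter.inter_mem hs hX
      obtain ⟨i, hiT, hiX⟩ := Filter.nonempty_of_mem hint
      obtain ⟨⟨j, hj⟩, hige⟩ := hiX
      subst hj
      have hjJ1 : J1 ≤ j := by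
        have hige' : tauW J1 ≤ tauW j := hige
        exact tau_strictMono.le_iff_le.mp hige'
      obtain ⟨he, hjN⟩ := hJ1 j hjJ1
      set N := 1 * ⌈(tauW j:ℝ) ^ (1 - (l:ℝ))⌉₊ with hNdef
      have hjN' : j < N := by rw [hNdef, one_mul]; exact hjN
      have hT := hiT (Wpart v hpp r N) (witW_val v hpp r N)
      have hge := Wpart_ww_ge v hpp hp0 hr0.le (i := tauW j) hjN'
      have heN : (nnW r j : ℝ) + (tauW j:ℝ) * ((qqW p hpp r j : ℚ):ℝ) < (N : ℝ) := by
        rw [hNdef]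
        push_cast
        rw [one_mul]
        exact he
      have hstrict : (v (p : K)) ^ (N : ℕ) <
          (v (p : K)) ^ ((nnW r j : ℝ) + (tauW j:ℝ) * ((qqW p hpp r j : ℚ):ℝ)) := by
        rw [cpow_eq_rpow]
        exact NNReal.rpow_lt_rpow_of_exponent_gt hp0 hp1 heN
      exact absurd (hge.trans hT) (not_le.mpr hstrict)
    rw [SetLike.lt_iff_le_and_exists]
    exact ⟨fun f hf => hle f hf, w, hwm, hwl⟩


/-- the integral perfectoid Tate algebra `O_K⟨x^{1/p^∞}⟩` over a perfectoid
field `K` of characteristic `0` and residue characteristic `p` (the `p`-adic completion of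
the monoid algebra `O_K[x^{1/p^∞}]`) has a strictly increasing chain of prime ideals
indexed by the real interval `(0,1)`; in particular it has uncountable Krull dimension. -/
theorem integralPerfectoidTateAlgebra_char_zero_uncountable_chain_of_primes
    (p : ℕ) (hp : p.Prime) (K : Type) [Field K] [CharZero K]
    (v : Valuation K NNReal)
    (hp0 : 0 < v (p : K)) (hp1 : v (p : K) < 1)
    (hcomplete : ∀ f : ℕ → K,
      (∀ ε : NNReal, 0 < ε → ∃ N : ℕ, ∀ m ≥ N, ∀ n ≥ N, v (f m - f n) < ε) →
      ∃ L : K, ∀ ε : NNReal, 0 < ε → ∃ N : ℕ, ∀ n ≥ N, v (f n - L) < ε)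
    (hdense : ∀ a b : NNReal, 0 < a → a < b → ∃ x : K, x ≠ 0 ∧ a < v x ∧ v x < b)
    (hFrobSurj : ∀ a : v.integer, ∃ b : v.integer, v ((b : K) ^ p - (a : K)) ≤ v (p : K)) :
    ∃ P : Set.Ioo (0 : ℝ) 1 →
        Ideal (AdicCompletion
          (Ideal.span {algebraMap v.integer
            (AddMonoidAlgebra v.integer (pPowRat p)) (p : v.integer)})
          (AddMonoidAlgebra v.integer (pPowRat p))),
      (∀ l, (P l).IsPrime) ∧
      ∀ l m : Set.Ioo (0 : ℝ) 1, (l : ℝ) < (m : ℝ) → P l < P m :=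
  main_thm p hp K v hp0 hp1
end Aux
end

section
/- Let p be a prime and let K be a perfectoid field of characteristic p with ring of integers O_K and pseudo-uniformizer π. Then the localization of the integral perfectoid Tate algebra O_K⟨x^{1/p^∞}⟩ away from (the image of) π — that is, the perfectoid Tate algebra K⟨x^{1/p^∞}⟩ over the field K — admits a family (𝔭_λ)_{λ∈(0,1)} of prime ideals, indexed by the real interval (0,1), with 𝔭_λ ⊊ 𝔭_μ whenever λ < μ; in particular it has uncountable Krull dimension. -/
set_option synthInstance.maxHeartbeats 1000000
set_option maxHeartbeats 1000000

instance instCoeFunAMA {R M : Type*} [Semiring R] :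
    CoeFun (AddMonoidAlgebra R M) (fun _ => M → R) := ⟨fun x => x.coeff⟩

namespace PTA

section

variable (p : ℕ) {K : Type} [Field K] (v : Valuation K NNReal) (π : v.integer)

local notation "O" => v.integer
local notation "R'" => AddMonoidAlgebra v.integer (pPowRat p)
local notation "I'" => Ideal.span {algebraMap v.integer (AddMonoidAlgebra v.integer (pPowRat p)) π}
local notation "A'" => AdicCompletion (Ideal.span {algebraMap v.integer (AddMonoidAlgebra v.integer (pPowRat p)) π}) (AddMonoidAlgebra v.integer (pPowRat p))

/-- real-valued valuation on the integer ring -/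
noncomputable def vr (a : v.integer) : ℝ := (v (a : K) : ℝ)

lemma vr_nonneg (a : O) : 0 ≤ vr v a := (v (a : K)).2

lemma vr_le_one (a : O) : vr v a ≤ 1 := by
  have := a.2
  simp only [Valuation.mem_integer_iff] at this
  exact_mod_cast this

lemma vr_zero : vr v 0 = 0 := by simp [vr]

lemma vr_one : vr v 1 = 1 := by simp [vr]

lemma vr_mul (a b : O) : vr v (a * b) = vr v a * vr v b := by
  simp [vr, Valuation.map_mul]

lemma vr_pow (a : O) (n : ℕ) : vr v (a ^ n) = (vr v a) ^ n := by
  induction n with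
  | zero => simp [vr]
  | succ n ih => rw [pow_succ, pow_succ, vr_mul, ih]

lemma vr_add_le (a b : O) : vr v (a + b) ≤ max (vr v a) (vr v b) := by
  have := v.map_add (a : K) (b : K)
  simp only [vr]
  push_cast
  exact_mod_cast this

lemma vr_add_eq_of_lt {a b : O} (h : vr v b < vr v a) : vr v (a + b) = vr v a := by
  have hne : v (a : K) ≠ v (b : K) := by
    intro hc; rw [vr, vr, hc] at h; exact lt_irrefl _ h
  have := v.map_add_of_distinct_val hne
  have h2 : v ((a : K) + (b : K)) = v (a : K) := by
    rw [this, sup_eq_left]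
    exact le_of_lt (by exact_mod_cast h)
  simp only [vr]
  push_cast
  exact_mod_cast h2

lemma vr_sum_le {ι : Type} (s : Finset ι) (f : ι → O) (B : ℝ) (hB : 0 ≤ B)
    (h : ∀ i ∈ s, vr v (f i) ≤ B) : vr v (∑ i ∈ s, f i) ≤ B := by
  classical
  induction s using Finset.induction_on with
  | empty => simpa [vr_zero] using hB
  | @insert a s' hnot ih =>
    rw [Finset.sum_insert hnot]
    refine le_trans (vr_add_le v _ _) (max_le (h a (Finset.mem_insert_self a s')) ?_)
    exact ih fun i hi => h i (Finset.mem_insert_of_mem hi)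

lemma vr_sum_lt {ι : Type} (s : Finset ι) (f : ι → O) (B : ℝ) (hB : 0 < B)
    (h : ∀ i ∈ s, vr v (f i) < B) : vr v (∑ i ∈ s, f i) < B := by
  classical
  induction s using Finset.induction_on with
  | empty => simpa [vr_zero] using hB
  | @insert a s' hnot ih =>
    rw [Finset.sum_insert hnot]
    refine lt_of_le_of_lt (vr_add_le v _ _) (max_lt (h a (Finset.mem_insert_self a s')) ?_)
    exact ih fun i hi => h i (Finset.mem_insert_of_mem hi)

end

section

variable (p : ℕ) {K : Type} [Field K] (v : Valuation K NNReal) (π : v.integer)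

local notation "O" => v.integer
local notation "R'" => AddMonoidAlgebra v.integer (pPowRat p)
local notation "I'" => Ideal.span {algebraMap v.integer (AddMonoidAlgebra v.integer (pPowRat p)) π}
local notation "A'" => AdicCompletion (Ideal.span {algebraMap v.integer (AddMonoidAlgebra v.integer (pPowRat p)) π}) (AddMonoidAlgebra v.integer (pPowRat p))

lemma mem_Ipow {x : R'} {m : ℕ} :
    x ∈ ((Ideal.span {algebraMap v.integer (AddMonoidAlgebra v.integer (pPowRat p)) π}) ^ m • ⊤ : Ideal R') ↔
      ∃ w : R', x = algebraMap v.integer (AddMonoidAlgebra v.integer (pPowRat p)) (π ^ m) * w := by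
  rw [smul_eq_mul, Ideal.mul_top, Ideal.span_singleton_pow, Ideal.mem_span_singleton, ← map_pow]
  constructor
  · rintro ⟨w, hw⟩; exact ⟨w, hw⟩
  · rintro ⟨w, hw⟩; exact ⟨w, hw⟩

lemma coeff_algebraMap_mul (a : O) (w : R') (q : pPowRat p) :
    (algebraMap v.integer (AddMonoidAlgebra v.integer (pPowRat p)) a * w) q = a * w q := by
  rw [show (algebraMap v.integer (AddMonoidAlgebra v.integer (pPowRat p)) a)
      = AddMonoidAlgebra.single 0 a by
    rw [AddMonoidAlgebra.coe_algebraMap]; simp]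
  exact AddMonoidAlgebra.coeff_single_zero_mul w a q

/-- `g` represents `F` at level `m`. -/
def IsRep (F : A') (m : ℕ) (g : R') : Prop :=
  Ideal.Quotient.mk ((Ideal.span {algebraMap v.integer (AddMonoidAlgebra v.integer (pPowRat p)) π}) ^ m • ⊤ : Ideal R') g = F.val m

lemma isRep_exists (F : A') (m : ℕ) : ∃ g : R', IsRep p v π F m g :=
  Ideal.Quotient.mk_surjective (F.val m)

lemma isRep_of_le {F : A'} {m n : ℕ} (hmn : m ≤ n) {g : R'} (h : IsRep p v π F n g) :
    IsRep p v π F m g := by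
  unfold IsRep at *
  rw [← F.2 hmn, ← h]
  rfl

/-- coefficients of two representatives at level `m` differ by `π^m`-multiples -/
lemma rep_coeff_le {F : A'} {m : ℕ} {g g' : R'} (h : IsRep p v π F m g)
    (h' : IsRep p v π F m g') (q : pPowRat p) :
    vr v (g q) ≤ max (vr v (g' q)) ((vr v π) ^ m) := by
  have hmem : g - g' ∈ ((Ideal.span {algebraMap v.integer (AddMonoidAlgebra v.integer (pPowRat p)) π}) ^ m • ⊤ : Ideal R') := by
    rw [← Ideal.Quotient.mk_eq_mk_iff_sub_mem (I := _)]
    exact h.trans h'.symm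
  obtain ⟨w, hw⟩ := (mem_Ipow p v π).1 hmem
  have hcoeff : (g - g') q = π ^ m * (w q) := by rw [hw, coeff_algebraMap_mul]
  have h2 : (g - g') q = g q - g' q := rfl
  have : g q = g' q + π ^ m * w q := sub_eq_iff_eq_add'.mp (h2.symm.trans hcoeff)
  rw [this]
  refine le_trans (vr_add_le v _ _) (max_le_max le_rfl ?_)
  rw [vr_mul, vr_pow]
  calc vr v π ^ m * vr v (w q) ≤ vr v π ^ m * 1 :=
        mul_le_mul_of_nonneg_left (vr_le_one v _) (pow_nonneg (vr_nonneg v π) m)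
    _ = vr v π ^ m := mul_one _

end
/-- The comparison bound. -/
noncomputable def bnd (p : ℕ) (l C : ℝ) (n : ℕ) (q : pPowRat p) : ℝ :=
  Real.exp (((q : ℚ) : ℝ) * n - C * (n : ℝ) ^ l)

lemma bnd_pos (p : ℕ) (l C : ℝ) (n : ℕ) (q : pPowRat p) : 0 < bnd p l C n q := Real.exp_pos _

lemma bnd_mono (p : ℕ) (l C : ℝ) (n : ℕ) {q q' : pPowRat p} (h : (q : ℚ) ≤ (q' : ℚ)) :
    bnd p l C n q ≤ bnd p l C n q' := by
  apply Real.exp_le_exp.2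
  apply sub_le_sub_right
  apply mul_le_mul_of_nonneg_right _ (Nat.cast_nonneg n)
  exact_mod_cast h

section

variable (p : ℕ) {K : Type} [Field K] (v : Valuation K NNReal) (π : v.integer)

local notation "O" => v.integer
local notation "R'" => AddMonoidAlgebra v.integer (pPowRat p)
local notation "A'" => AdicCompletion (Ideal.span {algebraMap v.integer (AddMonoidAlgebra v.integer (pPowRat p)) π}) (AddMonoidAlgebra v.integer (pPowRat p))

/-- All representatives at all levels have all coefficients bounded. -/
def Good (l C : ℝ) (n : ℕ) (F : A') : Prop :=
  ∀ (m : ℕ) (g : R'), IsRep p v π F m g → ∀ q : pPowRat p,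
    vr v (g q) ≤ max (bnd p l C n q) ((vr v π) ^ m)

lemma vr_coeff_mul_le (g h : R') (q : pPowRat p) (B : ℝ) (hB0 : 0 ≤ B)
    (hbound : ∀ q1 q2 : pPowRat p, q1 + q2 = q → vr v (g q1) * vr v (h q2) ≤ B) :
    vr v ((g * h) q) ≤ B := by
  classical
  rw [AddMonoidAlgebra.mul_apply]
  rw [Finsupp.sum]
  apply vr_sum_le v _ _ _ hB0
  intro q1 hq1
  rw [Finsupp.sum]
  apply vr_sum_le v _ _ _ hB0
  intro q2 hq2
  by_cases hc : q1 + q2 = q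
  · simp only [hc, if_pos rfl]
    exact le_trans (le_of_eq (vr_mul v _ _)) (hbound q1 q2 hc)
  · simp only [if_neg hc]
    simpa [vr_zero] using hB0

lemma good_add {l C : ℝ} {n : ℕ} {F G : A'} (hF : Good p v π l C n F)
    (hG : Good p v π l C n G) : Good p v π l C n (F + G) := by
  intro m k hk q
  obtain ⟨g, hg⟩ := isRep_exists p v π F m
  obtain ⟨h, hh⟩ := isRep_exists p v π G m
  have hgh : IsRep p v π (F + G) m (g + h) := by
    unfold IsRep at *
    rw [map_add, hg, hh, AdicCompletion.val_add, Pi.add_apply]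
  have h1 := rep_coeff_le p v π hk hgh q
  have h2 : vr v ((g + h) q) ≤ max (bnd p l C n q) ((vr v π) ^ m) := by
    have : (g + h) q = g q + h q := rfl
    rw [this]
    exact le_trans (vr_add_le v _ _) (max_le (hF m g hg q) (hG m h hh q))
  exact le_trans h1 (max_le h2 (le_max_right _ _))

lemma good_zero (l C : ℝ) (n : ℕ) : Good p v π l C n 0 := by
  intro m g hg q
  unfold IsRep at hg
  rw [AdicCompletion.val_zero] at hg
  have hmem := Ideal.Quotient.eq_zero_iff_mem.1 hg
  obtain ⟨w, hw⟩ := (mem_Ipow p v π).1 hmem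
  rw [hw, coeff_algebraMap_mul, vr_mul, vr_pow]
  refine le_trans ?_ (le_max_right _ _)
  calc vr v π ^ m * vr v (w q) ≤ vr v π ^ m * 1 :=
        mul_le_mul_of_nonneg_left (vr_le_one v _) (pow_nonneg (vr_nonneg v π) m)
    _ = vr v π ^ m := mul_one _

lemma good_mul_left {l C : ℝ} {n : ℕ} {F : A'} (c : A') (hF : Good p v π l C n F) :
    Good p v π l C n (c * F) := by
  intro m k hk q
  obtain ⟨h, hh⟩ := isRep_exists p v π c m
  obtain ⟨g, hg⟩ := isRep_exists p v π F m
  have hghrep : IsRep p v π (c * F) m (h * g) := by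
    unfold IsRep at *
    rw [map_mul, hh, hg, AdicCompletion.val_mul]
  have h1 := rep_coeff_le p v π hk hghrep q
  have h2 : vr v ((h * g) q) ≤ max (bnd p l C n q) ((vr v π) ^ m) := by
    apply vr_coeff_mul_le p v _ _ _ _ (le_max_of_le_left (le_of_lt (bnd_pos p l C n q)))
    intro q1 q2 hq12
    have hb := hF m g hg q2
    have hq2q : (q2 : ℚ) ≤ (q : ℚ) := by
      have h0 : (0 : ℚ) ≤ (q1 : ℚ) := q1.2.1
      have : (q1 : ℚ) + (q2 : ℚ) = (q : ℚ) := by exact_mod_cast congrArg (fun x : pPowRat p => ((x : ℚ))) hq12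
      linarith
    calc vr v (h q1) * vr v (g q2) ≤ 1 * vr v (g q2) :=
          mul_le_mul_of_nonneg_right (vr_le_one v _) (vr_nonneg v _)
      _ = vr v (g q2) := one_mul _
      _ ≤ max (bnd p l C n q2) ((vr v π) ^ m) := hb
      _ ≤ max (bnd p l C n q) ((vr v π) ^ m) :=
          max_le_max (bnd_mono p l C n hq2q) le_rfl
  exact le_trans h1 (max_le h2 (le_max_right _ _))

/-- The prime ideal at parameter `l`. -/
noncomputable def pIdl (l : ℝ) : Ideal A' where
  carrier := {F | ∀ C : ℝ, 0 < C → {n : ℕ | Good p v π l C n F} ∈ (Filter.hyperfilter ℕ : Ultrafilter ℕ)}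
  zero_mem' := by
    intro C hC
    have : {n : ℕ | Good p v π l C n (0 : A')} = Set.univ := by
      ext n; simp [good_zero p v π l C n]
    rw [this]
    exact Filter.univ_mem
  add_mem' := by
    intro F G hF hG C hC
    filter_upwards [hF C hC, hG C hC] with n h1 h2
    exact good_add p v π h1 h2
  smul_mem' := by
    intro c F hF C hC
    filter_upwards [hF C hC] with n h1
    rw [smul_eq_mul]
    exact good_mul_left p v π c h1

end
section

variable (p : ℕ) {K : Type} [Field K] (v : Valuation K NNReal) (π : v.integer)

local notation "O" => v.integer
local notation "R'" => AddMonoidAlgebra v.integer (pPowRat p)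
local notation "A'" => AdicCompletion (Ideal.span {algebraMap v.integer (AddMonoidAlgebra v.integer (pPowRat p)) π}) (AddMonoidAlgebra v.integer (pPowRat p))

lemma vr_pos_of_ne {a : O} (ha : a ≠ 0) : 0 < vr v a := by
  have h1 : (a : K) ≠ 0 := by
    simpa using fun hc => ha (Subtype.ext hc)
  have h2 : v (a : K) ≠ 0 := by
    simpa [Valuation.zero_iff] using h1
  have h3 : (0 : NNReal) < v (a : K) := lt_of_le_of_ne (by positivity) (Ne.symm h2)
  exact_mod_cast h3

lemma ne_zero_of_vr_pos {a : O} (ha : 0 < vr v a) : a ≠ 0 := by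
  intro hc; rw [hc, vr_zero] at ha; exact lt_irrefl _ ha

/-- From a failure of `Good` we obtain a coefficient which is large for every
representative at every sufficiently deep level. -/
lemma exists_big_coeff {l C : ℝ} {n : ℕ} {F : A'} (h : ¬ Good p v π l C n F) :
    ∃ (m0 : ℕ) (q0 : pPowRat p), ∀ m, m0 ≤ m → ∀ g : R', IsRep p v π F m g →
      bnd p l C n q0 < vr v (g q0) := by
  unfold Good at h
  push_neg at h
  obtain ⟨m0, g0, hg0, q0, hlt⟩ := h
  refine ⟨m0, q0, fun m hm g hg => ?_⟩
  have hg' : IsRep p v π F m0 g := isRep_of_le p v π hm hg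
  have hle := rep_coeff_le p v π hg0 hg' q0
  have hπlt : (vr v π) ^ m0 < vr v (g0 q0) := lt_of_le_of_lt (le_max_right _ _) hlt
  have hbndlt : bnd p l C n q0 < vr v (g0 q0) := lt_of_le_of_lt (le_max_left _ _) hlt
  rcases max_cases (vr v (g q0)) ((vr v π) ^ m0) with ⟨heq, _⟩ | ⟨heq, hlt2⟩
  · rw [heq] at hle
    exact lt_of_lt_of_le hbndlt hle
  · rw [heq] at hle
    exact absurd (lt_of_lt_of_le hπlt hle) (lt_irrefl _)

end

/-- weight function -/
noncomputable def wt (p : ℕ) (n : ℕ) (q : pPowRat p) : ℝ := Real.exp (-((q : ℚ) : ℝ) * n)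

lemma wt_pos (p n : ℕ) (q : pPowRat p) : 0 < wt p n q := Real.exp_pos _

section

variable (p : ℕ) {K : Type} [Field K] (v : Valuation K NNReal) (π : v.integer)

local notation "R'" => AddMonoidAlgebra v.integer (pPowRat p)

/-- lexicographic maximizer of `q ↦ vr (g q) * exp (-q n)` over the support -/
lemma exists_lex_max (g : R') (n : ℕ) (q0 : pPowRat p) (hq0 : g q0 ≠ 0) :
    ∃ q1, g q1 ≠ 0 ∧
      (∀ q : pPowRat p, vr v (g q) * wt p n q ≤ vr v (g q1) * wt p n q1) ∧
      (∀ q : pPowRat p, vr v (g q) * wt p n q = vr v (g q1) * wt p n q1 →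
        g q ≠ 0 → (q1 : ℚ) ≤ (q : ℚ)) := by
  classical
  set φ : pPowRat p → ℝ := fun q => vr v (g q) * wt p n q with hφ
  have hsupp : q0 ∈ g.coeff.support := Finsupp.mem_support_iff.2 hq0
  obtain ⟨qm, hqm, hqmax⟩ := Finset.exists_max_image g.coeff.support φ ⟨q0, hsupp⟩
  set T := g.coeff.support.filter (fun q => φ q = φ qm) with hT
  have hTne : T.Nonempty := ⟨qm, Finset.mem_filter.2 ⟨hqm, rfl⟩⟩
  obtain ⟨q1, hq1T, hq1min⟩ := Finset.exists_min_image T (fun q => ((q : ℚ) : ℝ)) hTne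
  rw [hT, Finset.mem_filter] at hq1T
  obtain ⟨hq1supp, hq1eq⟩ := hq1T
  have hmax : ∀ q : pPowRat p, φ q ≤ φ q1 := by
    intro q
    by_cases hq : q ∈ g.coeff.support
    · rw [hq1eq]; exact hqmax q hq
    · have : g q = 0 := Finsupp.notMem_support_iff.1 hq
      rw [hφ]
      simp only [this, vr_zero, zero_mul]
      exact mul_nonneg (vr_nonneg v _) (le_of_lt (wt_pos p n q1))
  refine ⟨q1, Finsupp.mem_support_iff.1 hq1supp, hmax, ?_⟩
  intro q hq hqne
  have hqT : q ∈ T := by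
    rw [hT, Finset.mem_filter]
    refine ⟨Finsupp.mem_support_iff.2 hqne, ?_⟩
    show φ q = φ qm
    rw [← hq1eq]
    exact hq
  exact_mod_cast hq1min q hqT

end
section

variable (p : ℕ) {K : Type} [Field K] (v : Valuation K NNReal) (π : v.integer)

local notation "R'" => AddMonoidAlgebra v.integer (pPowRat p)
local notation "A'" => AdicCompletion (Ideal.span {algebraMap v.integer (AddMonoidAlgebra v.integer (pPowRat p)) π}) (AddMonoidAlgebra v.integer (pPowRat p))

lemma mul_apply_prod (g h : R') (q : pPowRat p) :
    (g * h) q = ∑ a ∈ g.coeff.support ×ˢ h.coeff.support,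
      if a.1 + a.2 = q then g a.1 * h a.2 else 0 := by
  classical
  rw [AddMonoidAlgebra.mul_apply, Finsupp.sum, Finset.sum_product]
  exact Finset.sum_congr rfl fun a1 _ => by rw [Finsupp.sum]

lemma gauss_coeff (g h : R') (n : ℕ) (q1 q2 : pPowRat p)
    (hg1 : g q1 ≠ 0) (hh2 : h q2 ≠ 0)
    (hgmax : ∀ q : pPowRat p, vr v (g q) * wt p n q ≤
      vr v (g q1) * wt p n q1)
    (hgmin : ∀ q : pPowRat p, vr v (g q) * wt p n q =
      vr v (g q1) * wt p n q1 → g q ≠ 0 → (q1 : ℚ) ≤ (q : ℚ))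
    (hhmax : ∀ q : pPowRat p, vr v (h q) * wt p n q ≤
      vr v (h q2) * wt p n q2)
    (hhmin : ∀ q : pPowRat p, vr v (h q) * wt p n q =
      vr v (h q2) * wt p n q2 → h q ≠ 0 → (q2 : ℚ) ≤ (q : ℚ)) :
    vr v ((g * h) (q1 + q2)) = vr v (g q1) * vr v (h q2) := by
  classical
  have hwpos : ∀ q : pPowRat p, 0 < wt p n q := wt_pos p n
  have hVpos : 0 < vr v (g q1) * vr v (h q2) :=
    mul_pos (vr_pos_of_ne v hg1) (vr_pos_of_ne v hh2)
  have hΦgpos : 0 < vr v (g q1) * wt p n q1 := mul_pos (vr_pos_of_ne v hg1) (hwpos q1)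
  have hΦhpos : 0 < vr v (h q2) * wt p n q2 := mul_pos (vr_pos_of_ne v hh2) (hwpos q2)
  rw [mul_apply_prod]
  have hmem : (q1, q2) ∈ g.coeff.support ×ˢ h.coeff.support :=
    Finset.mem_product.2 ⟨Finsupp.mem_support_iff.2 hg1, Finsupp.mem_support_iff.2 hh2⟩
  rw [← Finset.add_sum_erase _ _ hmem]
  simp only [if_pos rfl, if_true]
  have hmain : vr v (g q1 * h q2) = vr v (g q1) * vr v (h q2) := vr_mul v _ _
  have hrest : vr v (∑ a ∈ (g.coeff.support ×ˢ h.coeff.support).erase (q1, q2),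
      if a.1 + a.2 = q1 + q2 then g a.1 * h a.2 else 0) < vr v (g q1 * h q2) := by
    rw [hmain]
    apply vr_sum_lt v _ _ _ hVpos
    intro a ha
    obtain ⟨hane, haprod⟩ := Finset.mem_erase.1 ha
    by_cases hsum : a.1 + a.2 = q1 + q2
    · rw [if_pos hsum, vr_mul]
      -- coercion fact
      have hsumq : ((a.1 : ℚ) : ℝ) + ((a.2 : ℚ) : ℝ) = ((q1 : ℚ) : ℝ) + ((q2 : ℚ) : ℝ) := by
        exact_mod_cast congrArg (fun x : pPowRat p => ((x : ℚ) : ℝ)) hsum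
      have hE : wt p n a.1 * wt p n a.2 = wt p n q1 * wt p n q2 := by
        unfold wt
        simp only [← Real.exp_add]
        congr 1
        nlinarith [hsumq]
      -- strict product inequality on weighted values
      have hkey : (vr v (g a.1) * wt p n a.1) * (vr v (h a.2) * wt p n a.2) <
          (vr v (g q1) * wt p n q1) * (vr v (h q2) * wt p n q2) := by
        rcases lt_or_eq_of_le (hgmax a.1) with hlt | heq
        · calc (vr v (g a.1) * wt p n a.1) * (vr v (h a.2) * wt p n a.2)
              ≤ (vr v (g a.1) * wt p n a.1) * (vr v (h q2) * wt p n q2) :=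
                mul_le_mul_of_nonneg_left (hhmax a.2)
                  (mul_nonneg (vr_nonneg v _) (le_of_lt (hwpos _)))
            _ < (vr v (g q1) * wt p n q1) * (vr v (h q2) * wt p n q2) :=
                mul_lt_mul_of_pos_right hlt hΦhpos
        · -- a.1 is also a maximizer
          have hga1 : g a.1 ≠ 0 := by
            intro hc
            rw [hc, vr_zero, zero_mul] at heq
            exact absurd heq (ne_of_lt hΦgpos)
          have hq1le : (q1 : ℚ) ≤ (a.1 : ℚ) := hgmin a.1 heq hga1
          have hne1 : (q1 : ℚ) ≠ (a.1 : ℚ) := by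
            intro hc
            apply hane
            have h1 : a.1 = q1 := Subtype.ext hc.symm
            have h2 : a.2 = q2 := by
              apply Subtype.ext
              have := congrArg (fun x : pPowRat p => (x : ℚ)) hsum
              push_cast at this
              have hc2 : (a.1 : ℚ) = (q1 : ℚ) := hc.symm
              linarith
            exact Prod.ext h1 h2
          have hlt1 : (q1 : ℚ) < (a.1 : ℚ) := lt_of_le_of_ne hq1le hne1
          have hlt2 : (a.2 : ℚ) < (q2 : ℚ) := by
            have := congrArg (fun x : pPowRat p => (x : ℚ)) hsum
            push_cast at this
            linarith
          have hstrict : vr v (h a.2) * wt p n a.2 < vr v (h q2) * wt p n q2 := by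
            rcases lt_or_eq_of_le (hhmax a.2) with h' | h'
            · exact h'
            · exfalso
              have hha2 : h a.2 ≠ 0 := by
                intro hc
                rw [hc, vr_zero, zero_mul] at h'
                exact absurd h' (ne_of_lt hΦhpos)
              exact absurd (hhmin a.2 h' hha2) (not_le.2 hlt2)
          calc (vr v (g a.1) * wt p n a.1) * (vr v (h a.2) * wt p n a.2)
              ≤ (vr v (g q1) * wt p n q1) * (vr v (h a.2) * wt p n a.2) := by
                rw [← heq]
            _ < (vr v (g q1) * wt p n q1) * (vr v (h q2) * wt p n q2) :=
                mul_lt_mul_of_pos_left hstrict hΦgpos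
      have hrw : (vr v (g a.1) * wt p n a.1) * (vr v (h a.2) * wt p n a.2) =
          (vr v (g a.1) * vr v (h a.2)) * (wt p n q1 * wt p n q2) := by
        rw [← hE]; ring
      have hrw2 : (vr v (g q1) * wt p n q1) * (vr v (h q2) * wt p n q2) =
          (vr v (g q1) * vr v (h q2)) * (wt p n q1 * wt p n q2) := by ring
      rw [hrw, hrw2] at hkey
      exact lt_of_mul_lt_mul_right hkey (le_of_lt (mul_pos (hwpos q1) (hwpos q2)))
    · rw [if_neg hsum, vr_zero]
      exact hVpos
  rw [vr_add_eq_of_lt v hrest, hmain]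

end
lemma wt_le_one (p n : ℕ) (q : pPowRat p) : wt p n q ≤ 1 := by
  unfold wt
  rw [show (1 : ℝ) = Real.exp 0 by rw [Real.exp_zero]]
  apply Real.exp_le_exp.2
  have h1 : (0:ℝ) ≤ ((q:ℚ):ℝ) := by exact_mod_cast q.2.1
  have h2 : (0:ℝ) ≤ (n:ℝ) := Nat.cast_nonneg n
  nlinarith

section

variable (p : ℕ) {K : Type} [Field K] (v : Valuation K NNReal) (π : v.integer)

local notation "R'" => AddMonoidAlgebra v.integer (pPowRat p)
local notation "A'" => AdicCompletion (Ideal.span {algebraMap v.integer (AddMonoidAlgebra v.integer (pPowRat p)) π}) (AddMonoidAlgebra v.integer (pPowRat p))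

lemma mem_pIdl {l : ℝ} {F : A'} : F ∈ pIdl p v π l ↔
    ∀ C : ℝ, 0 < C → {n : ℕ | Good p v π l C n F} ∈ (Filter.hyperfilter ℕ : Ultrafilter ℕ) :=
  Iff.rfl

lemma not_good_mul {l CF CG : ℝ} {n : ℕ} (hn : 1 ≤ n)
    (hπ0 : 0 < vr v π) (hπ1 : vr v π < 1) {F G : A'}
    (hF : ¬ Good p v π l CF n F) (hG : ¬ Good p v π l CG n G) :
    ¬ Good p v π l (CF + CG) n (F * G) := by
  classical
  obtain ⟨mF, qF, hkeyF⟩ := exists_big_coeff p v π hF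
  obtain ⟨mG, qG, hkeyG⟩ := exists_big_coeff p v π hG
  set δ : ℝ := Real.exp (-(CF + CG) * (n : ℝ) ^ l) with hδ
  have hδpos : 0 < δ := Real.exp_pos _
  obtain ⟨m1, hm1⟩ := exists_pow_lt_of_lt_one hδpos hπ1
  set m : ℕ := max (max mF mG) m1 with hm
  have hπm : (vr v π) ^ m < δ :=
    lt_of_le_of_lt (pow_le_pow_of_le_one (le_of_lt hπ0) (le_of_lt hπ1)
      (le_max_right _ _)) hm1
  obtain ⟨g, hg⟩ := isRep_exists p v π F m
  obtain ⟨h, hh⟩ := isRep_exists p v π G m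
  have hbigF : bnd p l CF n qF < vr v (g qF) :=
    hkeyF m (le_trans (le_max_left _ _) (le_max_left _ _)) g hg
  have hbigG : bnd p l CG n qG < vr v (h qG) :=
    hkeyG m (le_trans (le_max_right _ _) (le_max_left _ _)) h hh
  have hgF0 : g qF ≠ 0 := ne_zero_of_vr_pos v (lt_trans (bnd_pos p l CF n qF) hbigF)
  have hhG0 : h qG ≠ 0 := ne_zero_of_vr_pos v (lt_trans (bnd_pos p l CG n qG) hbigG)
  obtain ⟨q1, hq1ne, hgmax, hgmin⟩ := exists_lex_max p v g n qF hgF0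
  obtain ⟨q2, hq2ne, hhmax, hhmin⟩ := exists_lex_max p v h n qG hhG0
  -- lower bounds for the weighted maxima
  have hΦg : Real.exp (-CF * (n : ℝ) ^ l) < vr v (g q1) * wt p n q1 := by
    refine lt_of_lt_of_le ?_ (hgmax qF)
    have : bnd p l CF n qF * wt p n qF = Real.exp (-CF * (n : ℝ) ^ l) := by
      unfold bnd wt
      rw [← Real.exp_add]
      congr 1
      ring
    rw [← this]
    exact mul_lt_mul_of_pos_right hbigF (wt_pos p n qF)
  have hΦh : Real.exp (-CG * (n : ℝ) ^ l) < vr v (h q2) * wt p n q2 := by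
    refine lt_of_lt_of_le ?_ (hhmax qG)
    have : bnd p l CG n qG * wt p n qG = Real.exp (-CG * (n : ℝ) ^ l) := by
      unfold bnd wt
      rw [← Real.exp_add]
      congr 1
      ring
    rw [← this]
    exact mul_lt_mul_of_pos_right hbigG (wt_pos p n qG)
  have hδΦ : δ < (vr v (g q1) * wt p n q1) * (vr v (h q2) * wt p n q2) := by
    have := mul_lt_mul'' hΦg hΦh (le_of_lt (Real.exp_pos _)) (le_of_lt (Real.exp_pos _))
    refine lt_of_le_of_lt (le_of_eq ?_) this
    rw [hδ, ← Real.exp_add]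
    congr 1
    ring
  -- the product coefficient
  have hV := gauss_coeff p v g h n q1 q2 hq1ne hq2ne hgmax hgmin hhmax hhmin
  -- g * h represents F * G at level m
  have hrep : IsRep p v π (F * G) m (g * h) := by
    unfold IsRep at *
    rw [map_mul, hg, hh, AdicCompletion.val_mul]
  unfold Good
  push_neg
  refine ⟨m, g * h, hrep, q1 + q2, ?_⟩
  rw [hV]
  apply max_lt
  · -- bnd < V
    have hwtE : wt p n q1 * wt p n q2 = wt p n (q1 + q2) := by
      unfold wt
      rw [← Real.exp_add]
      congr 1
      push_cast
      ring
    have h1 : δ < (vr v (g q1) * vr v (h q2)) * wt p n (q1 + q2) := by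
      rw [← hwtE]
      refine lt_of_lt_of_le hδΦ (le_of_eq (by ring))
    have h2 : bnd p l (CF + CG) n (q1 + q2) * wt p n (q1 + q2) = δ := by
      unfold bnd wt
      rw [hδ, ← Real.exp_add]
      congr 1
      ring
    have h3 : bnd p l (CF + CG) n (q1 + q2) * wt p n (q1 + q2) <
        (vr v (g q1) * vr v (h q2)) * wt p n (q1 + q2) := by
      rw [h2]; exact h1
    exact lt_of_mul_lt_mul_right h3 (le_of_lt (wt_pos p n (q1 + q2)))
  · -- vπ^m < V
    refine lt_trans hπm ?_
    refine lt_of_lt_of_le hδΦ ?_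
    calc (vr v (g q1) * wt p n q1) * (vr v (h q2) * wt p n q2)
        = (vr v (g q1) * vr v (h q2)) * (wt p n q1 * wt p n q2) := by ring
      _ ≤ (vr v (g q1) * vr v (h q2)) * 1 := by
          apply mul_le_mul_of_nonneg_left _ (mul_nonneg (vr_nonneg v _) (vr_nonneg v _))
          calc wt p n q1 * wt p n q2 ≤ 1 * 1 :=
                mul_le_mul (wt_le_one p n q1) (wt_le_one p n q2)
                  (le_of_lt (wt_pos p n q2)) zero_le_one
            _ = 1 := one_mul _
      _ = vr v (g q1) * vr v (h q2) := mul_one _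

lemma one_not_mem {l : ℝ} (hl : 0 < l) (hπ1 : vr v π < 1) :
    (1 : A') ∉ pIdl p v π l := by
  intro hmem
  have h1 := (mem_pIdl p v π).1 hmem 1 one_pos
  have hsub : {n : ℕ | Good p v π l 1 n (1 : A')} ⊆ {0} := by
    intro n hn
    by_contra hn0
    have hn1 : 1 ≤ n := Nat.one_le_iff_ne_zero.2 hn0
    have hrep1 : IsRep p v π (1 : A') 1 (1 : R') := by
      unfold IsRep
      rw [map_one, AdicCompletion.val_one]
    have := hn (1 : ℕ) (1 : R') hrep1 0
    have hcoeff : ((1 : R') 0 : v.integer) = 1 := by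
      rw [AddMonoidAlgebra.one_def]
      exact Finsupp.single_eq_same
    rw [hcoeff, vr_one] at this
    have hb : bnd p l 1 n 0 < 1 := by
      unfold bnd
      have hq0 : (((0 : pPowRat p) : ℚ) : ℝ) = 0 := by norm_num
      have hpos : 0 < (n : ℝ) ^ l := Real.rpow_pos_of_pos (by exact_mod_cast hn1) l
      have harg : (((0 : pPowRat p) : ℚ) : ℝ) * n - 1 * (n : ℝ) ^ l < 0 := by
        rw [hq0]; nlinarith
      calc Real.exp ((((0 : pPowRat p) : ℚ) : ℝ) * n - 1 * (n : ℝ) ^ l) < Real.exp 0 :=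
            Real.exp_lt_exp.2 harg
        _ = 1 := Real.exp_zero
    have hπ : vr v π ^ 1 < 1 := by rw [pow_one]; exact hπ1
    have := le_trans this (le_of_eq rfl)
    have hmax : max (bnd p l 1 n 0) (vr v π ^ 1) < 1 := max_lt hb hπ
    linarith
  have := Filter.mem_of_superset h1 hsub
  exact (Set.finite_singleton 0).notMem_hyperfilter this

lemma pIdl_isPrime {l : ℝ} (hl : 0 < l) (hπ0 : 0 < vr v π) (hπ1 : vr v π < 1) :
    (pIdl p v π l).IsPrime := by
  constructor
  · intro htop
    exact one_not_mem p v π hl hπ1 (htop ▸ Submodule.mem_top)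
  · intro F G hFG
    by_contra hcon
    push_neg at hcon
    obtain ⟨hFn, hGn⟩ := hcon
    rw [mem_pIdl] at hFn hGn
    push_neg at hFn hGn
    obtain ⟨CF, hCF, hSF⟩ := hFn
    obtain ⟨CG, hCG, hSG⟩ := hGn
    have hSFc : {n : ℕ | Good p v π l CF n F}ᶜ ∈ (Filter.hyperfilter ℕ : Ultrafilter ℕ) :=
      Ultrafilter.compl_mem_iff_notMem.2 hSF
    have hSGc : {n : ℕ | Good p v π l CG n G}ᶜ ∈ (Filter.hyperfilter ℕ : Ultrafilter ℕ) :=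
      Ultrafilter.compl_mem_iff_notMem.2 hSG
    have hS : {n : ℕ | Good p v π l (CF + CG) n (F * G)} ∈ (Filter.hyperfilter ℕ : Ultrafilter ℕ) :=
      (mem_pIdl p v π).1 hFG (CF + CG) (add_pos hCF hCG)
    have hN : {n : ℕ | 1 ≤ n} ∈ (Filter.hyperfilter ℕ : Ultrafilter ℕ) :=
      Nat.hyperfilter_le_atTop (Filter.mem_atTop 1)
    have hint := Filter.inter_mem (Filter.inter_mem hS hSFc) (Filter.inter_mem hSGc hN)
    obtain ⟨n, ⟨hn1, hn2⟩, hn3, hn4⟩ := Filter.nonempty_of_mem hint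
    exact absurd hn1 (not_good_mul p v π hn4 hπ0 hπ1 hn2 hn3)

end
/-- eventual domination between rpow scales -/
lemma exists_forall_rpow_le (a b : ℝ) (hb : 0 < b) {e1 e2 : ℝ} (he : e1 < e2) :
    ∃ N : ℕ, 1 ≤ N ∧ ∀ n : ℕ, N ≤ n → a * (n : ℝ) ^ e1 ≤ b * (n : ℝ) ^ e2 := by
  rcases le_or_gt a 0 with ha | ha
  · refine ⟨1, le_rfl, fun n hn => ?_⟩
    have hn1 : (1 : ℝ) ≤ (n : ℝ) := by exact_mod_cast hn
    have h1 : a * (n : ℝ) ^ e1 ≤ 0 :=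
      mul_nonpos_of_nonpos_of_nonneg ha (Real.rpow_nonneg (by linarith) e1)
    have h2 : 0 ≤ b * (n : ℝ) ^ e2 :=
      mul_nonneg (le_of_lt hb) (Real.rpow_nonneg (by linarith) e2)
    linarith
  · set x0 : ℝ := (a / b) ^ (1 / (e2 - e1)) with hx0
    have hab : 0 < a / b := div_pos ha hb
    have hx0pos : 0 < x0 := Real.rpow_pos_of_pos hab _
    refine ⟨max 1 (Nat.ceil x0), le_max_left _ _, fun n hn => ?_⟩
    have hn1 : 1 ≤ n := le_trans (le_max_left _ _) hn
    have hnr : (1 : ℝ) ≤ (n : ℝ) := by exact_mod_cast hn1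
    have hnpos : (0 : ℝ) < (n : ℝ) := by linarith
    have hx0n : x0 ≤ (n : ℝ) := by
      have h1 : Nat.ceil x0 ≤ n := le_trans (le_max_right _ _) hn
      exact le_trans (Nat.le_ceil x0) (by exact_mod_cast h1)
    have hkey : a / b ≤ (n : ℝ) ^ (e2 - e1) := by
      have h1 : x0 ^ (e2 - e1) ≤ (n : ℝ) ^ (e2 - e1) :=
        Real.rpow_le_rpow (le_of_lt hx0pos) hx0n (by linarith)
      have h2 : x0 ^ (e2 - e1) = a / b := by
        rw [hx0, ← Real.rpow_mul (le_of_lt hab), one_div_mul_cancel (by linarith : e2 - e1 ≠ 0),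
          Real.rpow_one]
      linarith
    have hsplit : (n : ℝ) ^ e2 = (n : ℝ) ^ e1 * (n : ℝ) ^ (e2 - e1) := by
      rw [← Real.rpow_add hnpos]; ring_nf
    rw [hsplit]
    have h3 : a * (n : ℝ) ^ e1 ≤ (b * (n : ℝ) ^ (e2 - e1)) * (n : ℝ) ^ e1 := by
      apply mul_le_mul_of_nonneg_right _ (Real.rpow_nonneg (le_of_lt hnpos) e1)
      calc a = b * (a / b) := by field_simp
        _ ≤ b * (n : ℝ) ^ (e2 - e1) := mul_le_mul_of_nonneg_left hkey (le_of_lt hb)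
    linarith [h3]

section

variable (p : ℕ) {K : Type} [Field K] (v : Valuation K NNReal) (π : v.integer)

local notation "R'" => AddMonoidAlgebra v.integer (pPowRat p)
local notation "A'" => AdicCompletion (Ideal.span {algebraMap v.integer (AddMonoidAlgebra v.integer (pPowRat p)) π}) (AddMonoidAlgebra v.integer (pPowRat p))

lemma good_mono {l l' C : ℝ} {n : ℕ} (hll' : l ≤ l') (hn : 1 ≤ n) (hC : 0 ≤ C) {F : A'}
    (h : Good p v π l' C n F) : Good p v π l C n F := by
  intro m g hg q
  refine le_trans (h m g hg q) (max_le_max ?_ le_rfl)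
  unfold bnd
  apply Real.exp_le_exp.2
  apply sub_le_sub_left
  apply mul_le_mul_of_nonneg_left _ hC
  exact Real.rpow_le_rpow_of_exponent_le (by exact_mod_cast hn) hll'

lemma pIdl_mono {l l' : ℝ} (hll' : l ≤ l') : pIdl p v π l' ≤ pIdl p v π l := by
  intro F hF
  rw [mem_pIdl] at hF ⊢
  intro C hC
  have hN : {n : ℕ | 1 ≤ n} ∈ (Filter.hyperfilter ℕ : Ultrafilter ℕ) :=
    Nat.hyperfilter_le_atTop (Filter.mem_atTop 1)
  filter_upwards [hF C hC, hN] with n h1 h2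
  exact good_mono p v π hll' h2 (le_of_lt hC) h1

end
section

variable (p : ℕ) (hp : p.Prime) {K : Type} [Field K] (v : Valuation K NNReal) (π : v.integer)

local notation "R'" => AddMonoidAlgebra v.integer (pPowRat p)
local notation "A'" => AdicCompletion (Ideal.span {algebraMap v.integer (AddMonoidAlgebra v.integer (pPowRat p)) π}) (AddMonoidAlgebra v.integer (pPowRat p))

/-- the exponent `p^{-k}` as an element of the monoid -/
def qe (k : ℕ) : pPowRat p :=
  ⟨((p : ℚ)⁻¹) ^ k, by
    constructor
    · positivity
    · refine ⟨k, 1, ?_⟩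
      have hp0 : (p : ℚ) ≠ 0 := by exact_mod_cast hp.ne_zero
      rw [← mul_pow, mul_inv_cancel₀ hp0, one_pow]
      norm_num⟩

lemma qe_coe (k : ℕ) : (((qe p hp k : pPowRat p) : ℚ) : ℝ) = ((p : ℝ)⁻¹) ^ k := by
  unfold qe
  push_cast
  norm_num

lemma qe_injective : Function.Injective (qe p hp) := by
  intro k j hkj
  have hp1 : (1 : ℚ) < (p : ℚ) := by exact_mod_cast hp.one_lt
  have h : ((p : ℚ)⁻¹) ^ k = ((p : ℚ)⁻¹) ^ j := congrArg (fun x : pPowRat p => (x : ℚ)) hkj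
  rw [inv_pow, inv_pow, inv_inj] at h
  have hmono : StrictMono (fun k : ℕ => (p : ℚ) ^ k) := fun a b hab => by
    exact pow_lt_pow_right₀ hp1 hab
  exact hmono.injective h

/-- coefficient exponents -/
noncomputable def bexp (α : ℝ) (k : ℕ) : ℕ := k + Nat.ceil ((p : ℝ) ^ ((k : ℝ) * α))

lemma le_bexp (α : ℝ) (k : ℕ) : k ≤ bexp p α k := Nat.le_add_right _ _

lemma bexp_ge (α : ℝ) (k : ℕ) : (p : ℝ) ^ ((k : ℝ) * α) ≤ (bexp p α k : ℝ) := by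
  unfold bexp
  push_cast
  have := Nat.le_ceil ((p : ℝ) ^ ((k : ℝ) * α))
  have h2 : (0:ℝ) ≤ k := Nat.cast_nonneg k
  linarith

lemma bexp_le (α : ℝ) (k : ℕ) (hpp : 0 < (p : ℝ)) :
    (bexp p α k : ℝ) ≤ (k : ℝ) + (p : ℝ) ^ ((k : ℝ) * α) + 1 := by
  unfold bexp
  push_cast
  have h1 := Nat.ceil_lt_add_one (le_of_lt (Real.rpow_pos_of_pos hpp ((k : ℝ) * α)))
  linarith

/-- the separating polynomial at level `m` -/
noncomputable def sepPoly (α : ℝ) (m : ℕ) : R' :=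
  ∑ k ∈ Finset.range m, AddMonoidAlgebra.single (qe p hp k) (π ^ (bexp p α k))

lemma single_mem_Ipow {m b : ℕ} (hmb : m ≤ b) (q : pPowRat p) :
    AddMonoidAlgebra.single q (π ^ b) ∈
      ((Ideal.span {algebraMap v.integer (AddMonoidAlgebra v.integer (pPowRat p)) π}) ^ m • ⊤ : Ideal R') := by
  rw [mem_Ipow]
  refine ⟨AddMonoidAlgebra.single q (π ^ (b - m)), ?_⟩
  rw [show (algebraMap v.integer (AddMonoidAlgebra v.integer (pPowRat p)) (π ^ m))
      = AddMonoidAlgebra.single 0 (π ^ m) by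
    rw [AddMonoidAlgebra.coe_algebraMap]; simp]
  rw [AddMonoidAlgebra.single_mul_single, zero_add, ← pow_add, Nat.add_sub_cancel' hmb]

/-- the separating element of the adic completion -/
noncomputable def sep (α : ℝ) : A' :=
  ⟨fun m => Ideal.Quotient.mk _ (sepPoly p hp v π α m), by
    intro m n hmn
    rw [AdicCompletion.transitionMap_ideal_mk]
    rw [Ideal.Quotient.mk_eq_mk_iff_sub_mem]
    rw [show sepPoly p hp v π α n - sepPoly p hp v π α m
        = ∑ k ∈ Finset.Ico m n, AddMonoidAlgebra.single (qe p hp k) (π ^ (bexp p α k)) from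
      (Finset.sum_Ico_eq_sub _ hmn).symm]
    apply Ideal.sum_mem
    intro k hk
    have hmk : m ≤ k := (Finset.mem_Ico.1 hk).1
    exact single_mem_Ipow p v π (le_trans hmk (le_bexp p α k)) _⟩

lemma sep_isRep (α : ℝ) (m : ℕ) : IsRep p v π (sep p hp v π α) m (sepPoly p hp v π α m) := rfl

lemma sepPoly_coeff_qe (α : ℝ) {m k : ℕ} (hk : k < m) :
    (sepPoly p hp v π α m) (qe p hp k) = π ^ (bexp p α k) := by
  classical
  unfold sepPoly
  rw [AddMonoidAlgebra.coeff_sum]; simp only [AddMonoidAlgebra.coeff_single]; rw [Finset.sum_apply']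
  rw [Finset.sum_eq_single k]
  · rw [Finsupp.single_eq_same]
  · intro j _ hjk
    exact Finsupp.single_eq_of_ne' (fun hc => hjk (qe_injective p hp hc))
  · intro hc
    exact absurd (Finset.mem_range.2 hk) hc

lemma sepPoly_coeff_other (α : ℝ) (m : ℕ) {q : pPowRat p}
    (hq : ∀ k, k < m → q ≠ qe p hp k) : (sepPoly p hp v π α m) q = 0 := by
  classical
  unfold sepPoly
  rw [AddMonoidAlgebra.coeff_sum]; simp only [AddMonoidAlgebra.coeff_single]; rw [Finset.sum_apply']
  apply Finset.sum_eq_zero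
  intro k hk
  exact Finsupp.single_eq_of_ne' (fun hc => (hq k (Finset.mem_range.1 hk)) hc.symm)

end
lemma alpha_pos {κ : ℝ} (hκ0 : 0 < κ) (hκ1 : κ < 1) : 0 < κ / (1 - κ) :=
  div_pos hκ0 (by linarith)

lemma alpha_id1 {κ : ℝ} (hκ1 : κ < 1) : (κ / (1 - κ)) * (1 - κ) = κ := by
  have h : (1 - κ) ≠ 0 := by intro hc; rw [sub_eq_zero] at hc; exact absurd hc.symm (ne_of_lt hκ1)
  field_simp

lemma alpha_id2 {κ : ℝ} (hκ1 : κ < 1) : κ * (1 + κ / (1 - κ)) = κ / (1 - κ) := by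
  have h : (1 - κ) ≠ 0 := by intro hc; rw [sub_eq_zero] at hc; exact absurd hc.symm (ne_of_lt hκ1)
  field_simp
  try ring

/-- The weighted AM-GM lower bound. -/
lemma key_lower {κ : ℝ} (hκ0 : 0 < κ) (hκ1 : κ < 1) {c : ℝ} (hc : 0 < c)
    {p : ℕ} (hp2 : 2 ≤ p) (k n : ℕ) (hn : 1 ≤ n) :
    min c 1 * (n : ℝ) ^ κ ≤ c * (bexp p (κ / (1 - κ)) k : ℝ) + ((p : ℝ)⁻¹) ^ k * (n : ℝ) := by
  have hppos : (0 : ℝ) < p := by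
    have : (0:ℕ) < p := by omega
    exact_mod_cast this
  have hnpos : (0 : ℝ) < n := by exact_mod_cast hn
  set α := κ / (1 - κ) with hα
  set a : ℝ := (p : ℝ) ^ ((k : ℝ) * α) with ha
  set B : ℝ := ((p : ℝ)⁻¹) ^ k * (n : ℝ) with hB
  have hapos : 0 < a := Real.rpow_pos_of_pos hppos _
  have hBpos : 0 < B := mul_pos (pow_pos (inv_pos.2 hppos) k) hnpos
  have h1 : a ^ (1 - κ) = (p : ℝ) ^ ((k : ℝ) * κ) := by
    rw [ha, ← Real.rpow_mul (le_of_lt hppos)]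
    congr 1
    rw [mul_assoc, hα, alpha_id1 hκ1]
  have h2 : B ^ κ = (p : ℝ) ^ (-((k : ℝ) * κ)) * (n : ℝ) ^ κ := by
    rw [hB, Real.mul_rpow (pow_nonneg (inv_nonneg.2 (le_of_lt hppos)) k) (le_of_lt hnpos)]
    congr 1
    rw [inv_pow, ← Real.rpow_natCast (p : ℝ) k, ← Real.rpow_neg (le_of_lt hppos),
      ← Real.rpow_mul (le_of_lt hppos)]
    congr 1
    ring
  have hg : a ^ (1 - κ) * B ^ κ = (n : ℝ) ^ κ := by
    rw [h1, h2, ← mul_assoc, ← Real.rpow_add hppos,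
      show (k : ℝ) * κ + -((k : ℝ) * κ) = 0 by ring, Real.rpow_zero, one_mul]
  have hamgm : a ^ (1 - κ) * B ^ κ ≤ a + B := by
    rcases le_total a B with hab | hab
    · have h3 : a ^ (1 - κ) ≤ B ^ (1 - κ) :=
        Real.rpow_le_rpow (le_of_lt hapos) hab (by linarith)
      have h4 : a ^ (1 - κ) * B ^ κ ≤ B ^ (1 - κ) * B ^ κ :=
        mul_le_mul_of_nonneg_right h3 (Real.rpow_nonneg (le_of_lt hBpos) κ)
      have h5 : B ^ (1 - κ) * B ^ κ = B := by
        rw [← Real.rpow_add hBpos, show 1 - κ + κ = 1 by ring, Real.rpow_one]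
      linarith
    · have h3 : B ^ κ ≤ a ^ κ :=
        Real.rpow_le_rpow (le_of_lt hBpos) hab (le_of_lt hκ0)
      have h4 : a ^ (1 - κ) * B ^ κ ≤ a ^ (1 - κ) * a ^ κ :=
        mul_le_mul_of_nonneg_left h3 (Real.rpow_nonneg (le_of_lt hapos) _)
      have h5 : a ^ (1 - κ) * a ^ κ = a := by
        rw [← Real.rpow_add hapos, show 1 - κ + κ = 1 by ring, Real.rpow_one]
      linarith
  have hmin0 : 0 ≤ min c 1 := le_min (le_of_lt hc) zero_le_one
  have h6 : min c 1 * (n : ℝ) ^ κ ≤ min c 1 * (a + B) := by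
    apply mul_le_mul_of_nonneg_left _ hmin0
    rw [← hg]; exact hamgm
  have h7 : min c 1 * a ≤ c * a :=
    mul_le_mul_of_nonneg_right (min_le_left c 1) (le_of_lt hapos)
  have h8 : min c 1 * B ≤ 1 * B :=
    mul_le_mul_of_nonneg_right (min_le_right c 1) (le_of_lt hBpos)
  have h9 : c * a ≤ c * (bexp p α k : ℝ) :=
    mul_le_mul_of_nonneg_left (by rw [ha]; exact bexp_ge p α k) (le_of_lt hc)
  have h10 : min c 1 * (a + B) = min c 1 * a + min c 1 * B := by ring
  linarith

/-- the well-chosen index -/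
noncomputable def knF (p : ℕ) (α : ℝ) (n : ℕ) : ℕ :=
  Nat.log p (Nat.floor ((n : ℝ) ^ (1 / (1 + α))))

/-- The upper bound at the well-chosen index. -/
lemma key_upper {κ μ : ℝ} (hκ0 : 0 < κ) (hκ1 : κ < 1) (hκμ : κ < μ) {c : ℝ} (hc : 0 < c)
    {p : ℕ} (hp2 : 2 ≤ p) :
    ∃ N : ℕ, 1 ≤ N ∧ ∀ n : ℕ, N ≤ n →
      c * (bexp p (κ / (1 - κ)) (knF p (κ / (1 - κ)) n) : ℝ)
        + ((p : ℝ)⁻¹) ^ (knF p (κ / (1 - κ)) n) * (n : ℝ)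
      < (n : ℝ) ^ μ := by
  unfold knF
  have hppos : (0 : ℝ) < p := by
    have : (0:ℕ) < p := by omega
    exact_mod_cast this
  set α := κ / (1 - κ) with hα
  have hαpos : 0 < α := alpha_pos hκ0 hκ1
  have h1α : (0 : ℝ) < 1 + α := by linarith
  have hlog2 : (0 : ℝ) < Real.log 2 := Real.log_pos (by norm_num)
  set C0 : ℝ := c * (1 / (κ * Real.log 2) + 2) + p with hC0
  obtain ⟨N1, hN11, hN1⟩ := exists_forall_rpow_le C0 (1/2) one_half_pos hκμ
  refine ⟨N1, hN11, fun n hn => ?_⟩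
  have hn1 : 1 ≤ n := le_trans hN11 hn
  have hnr : (1 : ℝ) ≤ (n : ℝ) := by exact_mod_cast hn1
  have hnpos : (0 : ℝ) < (n : ℝ) := by linarith
  set x : ℝ := (n : ℝ) ^ (1 / (1 + α)) with hx
  set kn : ℕ := Nat.log p (Nat.floor x) with hkn
  have hxpos : 0 < x := Real.rpow_pos_of_pos hnpos _
  have hx1 : 1 ≤ x := by
    rw [hx]
    calc (1:ℝ) = (1:ℝ) ^ (1 / (1+α)) := (Real.one_rpow _).symm
      _ ≤ (n:ℝ) ^ (1 / (1+α)) := Real.rpow_le_rpow zero_le_one hnr (by positivity)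
  have hKn1 : 1 ≤ Nat.floor x := Nat.le_floor (by exact_mod_cast hx1)
  have hKn0 : Nat.floor x ≠ 0 := by omega
  have hpkn : ((p : ℝ)) ^ kn ≤ x := by
    have h1 : p ^ kn ≤ Nat.floor x := Nat.pow_log_le_self p hKn0
    have h2 : ((Nat.floor x : ℕ) : ℝ) ≤ x := Nat.floor_le (le_of_lt hxpos)
    calc ((p:ℝ)) ^ kn = ((p ^ kn : ℕ) : ℝ) := by push_cast; ring
      _ ≤ ((Nat.floor x : ℕ) : ℝ) := by exact_mod_cast h1
      _ ≤ x := h2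
  have hxlt : x < ((p : ℝ)) ^ (kn + 1) := by
    have h1 : Nat.floor x < p ^ (kn + 1) := Nat.lt_pow_succ_log_self (by omega) _
    have h2 : x < (Nat.floor x : ℝ) + 1 := Nat.lt_floor_add_one x
    calc x < (Nat.floor x : ℝ) + 1 := h2
      _ ≤ ((p : ℝ)) ^ (kn + 1) := by exact_mod_cast h1
  have hid2 : κ * (1 + α) = α := by rw [hα]; exact alpha_id2 hκ1
  have he1 : 1 - 1 / (1 + α) = κ := by
    field_simp
    linarith [hid2]
  have he2 : (1 / (1 + α)) * α = κ := by
    field_simp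
    rw [mul_comm] at hid2
    linarith [hid2]
  have hnx : (n : ℝ) / x = (n : ℝ) ^ κ := by
    rw [← he1, Real.rpow_sub hnpos, Real.rpow_one, ← hx]
  have hpka : (p:ℝ) ^ ((kn:ℝ) * α) ≤ (n:ℝ) ^ κ := by
    have h1 : (p:ℝ) ^ ((kn:ℝ) * α) = ((p:ℝ) ^ (kn:ℕ)) ^ α := by
      rw [Real.rpow_mul (le_of_lt hppos), Real.rpow_natCast]
    have h2 : ((p:ℝ) ^ (kn:ℕ)) ^ α ≤ x ^ α :=
      Real.rpow_le_rpow (pow_nonneg (le_of_lt hppos) kn) hpkn (le_of_lt hαpos)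
    have h3 : x ^ α = (n:ℝ) ^ κ := by
      rw [hx, ← Real.rpow_mul (le_of_lt hnpos), he2]
    rw [h1, ← h3]
    exact h2
  have hinvn : ((p:ℝ)⁻¹) ^ kn * (n:ℝ) ≤ p * (n:ℝ)^κ := by
    have h1 : ((p:ℝ)⁻¹) ^ kn = (p:ℝ) / (p:ℝ)^(kn+1) := by
      rw [inv_pow, pow_succ]
      field_simp
    have h2 : (p:ℝ)/(p:ℝ)^(kn+1) ≤ (p:ℝ)/x :=
      div_le_div_of_nonneg_left (le_of_lt hppos) hxpos (le_of_lt hxlt)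
    calc ((p:ℝ)⁻¹) ^ kn * (n:ℝ) = ((p:ℝ)/(p:ℝ)^(kn+1)) * n := by rw [h1]
      _ ≤ ((p:ℝ)/x) * n := mul_le_mul_of_nonneg_right h2 (le_of_lt hnpos)
      _ = (p:ℝ) * ((n:ℝ)/x) := by ring
      _ = (p:ℝ) * (n:ℝ)^κ := by rw [hnx]
  have hknle : (kn : ℝ) * Real.log 2 ≤ Real.log (n:ℝ) := by
    have h2p : (2:ℝ)^kn ≤ (p:ℝ)^kn := pow_le_pow_left₀ (by norm_num) (by exact_mod_cast hp2) kn
    have hxn : x ≤ (n:ℝ) := by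
      rw [hx]
      calc (n:ℝ)^(1/(1+α)) ≤ (n:ℝ)^(1:ℝ) :=
            Real.rpow_le_rpow_of_exponent_le hnr (by rw [div_le_one h1α]; linarith)
        _ = n := Real.rpow_one _
    have h3 : (2:ℝ)^kn ≤ (n:ℝ) := le_trans (le_trans h2p hpkn) hxn
    have h4 : Real.log ((2:ℝ)^kn) ≤ Real.log n := Real.log_le_log (by positivity) h3
    rw [Real.log_pow] at h4
    exact_mod_cast h4
  have hlogn : Real.log (n:ℝ) ≤ (n:ℝ)^κ / κ := by
    have h1 : Real.log ((n:ℝ)^κ) = κ * Real.log n := Real.log_rpow hnpos κ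
    have h2 : Real.log ((n:ℝ)^κ) ≤ (n:ℝ)^κ - 1 :=
      Real.log_le_sub_one_of_pos (Real.rpow_pos_of_pos hnpos κ)
    rw [le_div_iff₀ hκ0]
    nlinarith [h1, h2]
  have hkn2 : (kn:ℝ) ≤ (n:ℝ)^κ / (κ * Real.log 2) := by
    have hA : (kn:ℝ) * Real.log 2 ≤ (n:ℝ)^κ/κ := le_trans hknle hlogn
    have hB : κ * ((kn:ℝ) * Real.log 2) ≤ κ * ((n:ℝ)^κ/κ) :=
      mul_le_mul_of_nonneg_left hA (le_of_lt hκ0)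
    have hC : κ * ((n:ℝ)^κ/κ) = (n:ℝ)^κ := by field_simp
    rw [le_div_iff₀ (mul_pos hκ0 hlog2)]
    nlinarith [hB, hC]
  have hone : (1:ℝ) ≤ (n:ℝ)^κ := by
    calc (1:ℝ) = (1:ℝ)^κ := (Real.one_rpow _).symm
      _ ≤ (n:ℝ)^κ := Real.rpow_le_rpow zero_le_one hnr (le_of_lt hκ0)
  have hbexp : (bexp p α kn : ℝ) ≤ (kn:ℝ) + (p:ℝ)^((kn:ℝ)*α) + 1 := bexp_le p α kn hppos
  have hsum : c * (bexp p α kn : ℝ) + ((p:ℝ)⁻¹)^kn * n ≤ C0 * (n:ℝ)^κ := by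
    have t1 : c * (bexp p α kn : ℝ) ≤ c * ((n:ℝ)^κ/(κ*Real.log 2) + (n:ℝ)^κ + (n:ℝ)^κ) := by
      apply mul_le_mul_of_nonneg_left _ (le_of_lt hc)
      linarith [hbexp, hkn2, hpka, hone]
    have t2 : c * ((n:ℝ)^κ/(κ*Real.log 2) + (n:ℝ)^κ + (n:ℝ)^κ)
        = c * (1/(κ*Real.log 2) + 2) * (n:ℝ)^κ := by
      field_simp
      ring
    have t3 : C0 * (n:ℝ)^κ = c * (1/(κ*Real.log 2) + 2) * (n:ℝ)^κ + p * (n:ℝ)^κ := by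
      rw [hC0]; ring
    linarith [t1, t2, hinvn, t3]
  have hfin : C0 * (n:ℝ)^κ ≤ (1/2) * (n:ℝ)^μ := hN1 n hn
  have hμpos : 0 < (n:ℝ)^μ := Real.rpow_pos_of_pos hnpos μ
  linarith
section

variable (p : ℕ) (hp : p.Prime) {K : Type} [Field K] (v : Valuation K NNReal) (π : v.integer)

local notation "R'" => AddMonoidAlgebra v.integer (pPowRat p)
local notation "A'" => AdicCompletion (Ideal.span {algebraMap v.integer (AddMonoidAlgebra v.integer (pPowRat p)) π}) (AddMonoidAlgebra v.integer (pPowRat p))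

lemma sep_mem {κ lam : ℝ} (h0 : 0 < lam) (hlk : lam < κ) (hk1 : κ < 1)
    (hπ0 : 0 < vr v π) (hπ1 : vr v π < 1) :
    sep p hp v π (κ / (1 - κ)) ∈ pIdl p v π lam := by
  have hκ0 : 0 < κ := lt_trans h0 hlk
  set c := -Real.log (vr v π) with hc'
  have hc : 0 < c := by
    rw [hc']
    have := Real.log_neg hπ0 hπ1
    linarith
  have hvrpi : vr v π = Real.exp (-c) := by rw [hc', neg_neg, Real.exp_log hπ0]
  rw [mem_pIdl]
  intro C hC
  obtain ⟨N, hN1, hN⟩ := exists_forall_rpow_le C (min c 1) (lt_min hc one_pos) hlk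
  have hNmem : {n : ℕ | N ≤ n} ∈ (Filter.hyperfilter ℕ : Ultrafilter ℕ) :=
    Nat.hyperfilter_le_atTop (Filter.mem_atTop N)
  filter_upwards [hNmem] with n hn
  intro m g hg q
  have h1 := rep_coeff_le p v π hg (sep_isRep p hp v π (κ / (1 - κ)) m) q
  have h2 : vr v ((sepPoly p hp v π (κ / (1 - κ)) m) q) ≤ bnd p lam C n q := by
    classical
    by_cases hq : ∀ k, k < m → q ≠ qe p hp k
    · rw [sepPoly_coeff_other p hp v π _ m hq, vr_zero]
      exact le_of_lt (bnd_pos p lam C n q)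
    · push_neg at hq
      obtain ⟨k, hk, hqe⟩ := hq
      rw [hqe, sepPoly_coeff_qe p hp v π _ hk]
      have h3 : vr v (π ^ bexp p (κ / (1 - κ)) k)
          = Real.exp (-(c * (bexp p (κ / (1 - κ)) k : ℝ))) := by
        rw [vr_pow, hvrpi, ← Real.exp_nat_mul]
        congr 1
        ring
      rw [h3]
      unfold bnd
      apply Real.exp_le_exp.2
      rw [qe_coe]
      have h4 := key_lower hκ0 hk1 hc hp.two_le k n (le_trans hN1 hn)
      have h5 : C * (n : ℝ) ^ lam ≤ min c 1 * (n : ℝ) ^ κ := hN n hn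
      linarith [h4, h5]
  exact le_trans h1 (max_le_max h2 le_rfl)

lemma sep_not_mem {κ μ : ℝ} (hκ0 : 0 < κ) (hκ1 : κ < 1) (hκμ : κ < μ)
    (hπ0 : 0 < vr v π) (hπ1 : vr v π < 1) :
    sep p hp v π (κ / (1 - κ)) ∉ pIdl p v π μ := by
  intro hmem
  set c := -Real.log (vr v π) with hc'
  have hc : 0 < c := by
    rw [hc']
    have := Real.log_neg hπ0 hπ1
    linarith
  have hvrpi : vr v π = Real.exp (-c) := by rw [hc', neg_neg, Real.exp_log hπ0]
  obtain ⟨N, hN1, hN⟩ := key_upper hκ0 hκ1 hκμ hc hp.two_le (p := p)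
  have hS := (mem_pIdl p v π).1 hmem 1 one_pos
  have hNmem : {n : ℕ | N ≤ n} ∈ (Filter.hyperfilter ℕ : Ultrafilter ℕ) :=
    Nat.hyperfilter_le_atTop (Filter.mem_atTop N)
  obtain ⟨n, hGood, hn⟩ := Filter.nonempty_of_mem (Filter.inter_mem hS hNmem)
  have hkm : knF p (κ / (1 - κ)) n < bexp p (κ / (1 - κ)) (knF p (κ / (1 - κ)) n) + 1 :=
    Nat.lt_succ_of_le (le_bexp p _ _)
  have hcoeff := hGood (bexp p (κ / (1 - κ)) (knF p (κ / (1 - κ)) n) + 1)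
    (sepPoly p hp v π (κ / (1 - κ)) _) (sep_isRep p hp v π (κ / (1 - κ)) _)
    (qe p hp (knF p (κ / (1 - κ)) n))
  rw [sepPoly_coeff_qe p hp v π _ hkm] at hcoeff
  have hval : vr v (π ^ bexp p (κ / (1 - κ)) (knF p (κ / (1 - κ)) n))
      = Real.exp (-(c * (bexp p (κ / (1 - κ)) (knF p (κ / (1 - κ)) n) : ℝ))) := by
    rw [vr_pow, hvrpi, ← Real.exp_nat_mul]
    congr 1
    ring
  have hb : bnd p μ 1 n (qe p hp (knF p (κ / (1 - κ)) n))
      < Real.exp (-(c * (bexp p (κ / (1 - κ)) (knF p (κ / (1 - κ)) n) : ℝ))) := by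
    unfold bnd
    apply Real.exp_lt_exp.2
    rw [qe_coe]
    have := hN n hn
    linarith [this]
  have hπm : vr v π ^ (bexp p (κ / (1 - κ)) (knF p (κ / (1 - κ)) n) + 1)
      < Real.exp (-(c * (bexp p (κ / (1 - κ)) (knF p (κ / (1 - κ)) n) : ℝ))) := by
    rw [hvrpi, ← Real.exp_nat_mul]
    apply Real.exp_lt_exp.2
    push_cast
    nlinarith [hc]
  rw [hval] at hcoeff
  exact absurd hcoeff (not_le.2 (max_lt hb hπm))

lemma piA_not_mem {l : ℝ} (hl : 0 < l) (hπ0 : 0 < vr v π) (hπ1 : vr v π < 1) :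
    algebraMap (AddMonoidAlgebra v.integer (pPowRat p))
      (AdicCompletion (Ideal.span {algebraMap v.integer (AddMonoidAlgebra v.integer (pPowRat p)) π}) (AddMonoidAlgebra v.integer (pPowRat p)))
      (algebraMap v.integer (AddMonoidAlgebra v.integer (pPowRat p)) π) ∉ pIdl p v π l := by
  intro hmem
  set c := -Real.log (vr v π) with hc'
  have hc : 0 < c := by
    rw [hc']
    have := Real.log_neg hπ0 hπ1
    linarith
  have h1 := (mem_pIdl p v π).1 hmem 1 one_pos
  obtain ⟨N, hN1, hN⟩ := exists_forall_rpow_le c (1/2) one_half_pos hl (e1 := 0)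
  have hNmem : {n : ℕ | N ≤ n} ∈ (Filter.hyperfilter ℕ : Ultrafilter ℕ) :=
    Nat.hyperfilter_le_atTop (Filter.mem_atTop N)
  obtain ⟨n, hGood, hn⟩ := Filter.nonempty_of_mem (Filter.inter_mem h1 hNmem)
  -- the representative at level 2
  have hrep : IsRep p v π (algebraMap (AddMonoidAlgebra v.integer (pPowRat p))
      (AdicCompletion (Ideal.span {algebraMap v.integer (AddMonoidAlgebra v.integer (pPowRat p)) π}) (AddMonoidAlgebra v.integer (pPowRat p)))
      (algebraMap v.integer (AddMonoidAlgebra v.integer (pPowRat p)) π)) 2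
      (algebraMap v.integer (AddMonoidAlgebra v.integer (pPowRat p)) π) := rfl
  have hcoeff := hGood 2 _ hrep 0
  have hc0 : ((algebraMap v.integer (AddMonoidAlgebra v.integer (pPowRat p)) π) 0 : v.integer) = π := by
    rw [show (algebraMap v.integer (AddMonoidAlgebra v.integer (pPowRat p)) π)
        = AddMonoidAlgebra.single 0 π by
      rw [AddMonoidAlgebra.coe_algebraMap]; simp]
    exact Finsupp.single_eq_same
  rw [hc0] at hcoeff
  have hb : bnd p l 1 n 0 < vr v π := by
    unfold bnd
    have hq0 : (((0 : pPowRat p) : ℚ) : ℝ) = 0 := by norm_num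
    rw [hq0]
    have hbig : c ≤ (1/2) * (n : ℝ) ^ l := by
      have := hN n hn
      rw [Real.rpow_zero, mul_one] at this
      exact this
    have hexp : Real.exp (0 * (n:ℝ) - 1 * (n : ℝ) ^ l) < Real.exp (-c) := by
      apply Real.exp_lt_exp.2
      have hpos : 0 < (n : ℝ) ^ l := by
        have hn1 : 1 ≤ n := le_trans hN1 hn
        exact Real.rpow_pos_of_pos (by exact_mod_cast hn1) l
      nlinarith
    calc Real.exp (0 * (n:ℝ) - 1 * (n : ℝ) ^ l) < Real.exp (-c) := hexp
      _ = vr v π := by rw [hc', neg_neg, Real.exp_log hπ0]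
  have hπ2 : vr v π ^ 2 < vr v π := by
    nlinarith [hπ0, hπ1]
  exact absurd hcoeff (not_le.2 (max_lt hb hπ2))

end
end PTA

/-- the perfectoid Tate algebra `K⟨x^{1/p^∞}⟩` over a perfectoid field `K`
of characteristic `p` — the localization of the integral perfectoid Tate algebra
`O_K⟨x^{1/p^∞}⟩` away from the image of the pseudo-uniformizer `π` — has a strictly
increasing chain of prime ideals indexed by the real interval `(0,1)`; in particular
it has uncountable Krull dimension. -/
theorem perfectoidTateAlgebra_char_p_uncountable_chain_of_primes
    (p : ℕ) (hp : p.Prime) (K : Type) [Field K] [CharP K p]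
    (v : Valuation K NNReal)
    (hnontriv : ∃ x : K, 0 < v x ∧ v x < 1)
    (hcomplete : ∀ f : ℕ → K,
      (∀ ε : NNReal, 0 < ε → ∃ N : ℕ, ∀ m ≥ N, ∀ n ≥ N, v (f m - f n) < ε) →
      ∃ L : K, ∀ ε : NNReal, 0 < ε → ∃ N : ℕ, ∀ n ≥ N, v (f n - L) < ε)
    (hperf : Function.Bijective (fun x : K => x ^ p))
    (π : v.integer) (hπ0 : 0 < v (π : K)) (hπ1 : v (π : K) < 1) :
    ∃ P : Set.Ioo (0 : ℝ) 1 →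
        Ideal (Localization.Away
          (algebraMap (AddMonoidAlgebra v.integer (pPowRat p))
            (AdicCompletion
              (Ideal.span {algebraMap v.integer
                (AddMonoidAlgebra v.integer (pPowRat p)) π})
              (AddMonoidAlgebra v.integer (pPowRat p)))
            (algebraMap v.integer (AddMonoidAlgebra v.integer (pPowRat p)) π))),
      (∀ l, (P l).IsPrime) ∧
      ∀ l m : Set.Ioo (0 : ℝ) 1, (l : ℝ) < (m : ℝ) → P l < P m := by
  classical
  have hπ0r : 0 < PTA.vr v π := by
    have : (0 : ℝ) < ((v (π : K) : NNReal) : ℝ) := by exact_mod_cast hπ0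
    exact this
  have hπ1r : PTA.vr v π < 1 := by
    have : ((v (π : K) : NNReal) : ℝ) < 1 := by exact_mod_cast hπ1
    exact this
  set A' := AdicCompletion
      (Ideal.span {algebraMap v.integer (AddMonoidAlgebra v.integer (pPowRat p)) π})
      (AddMonoidAlgebra v.integer (pPowRat p)) with hA'
  set πA : A' := algebraMap (AddMonoidAlgebra v.integer (pPowRat p)) A'
      (algebraMap v.integer (AddMonoidAlgebra v.integer (pPowRat p)) π) with hπA
  have hdisj : ∀ l : ℝ, 0 < l → l < 1 →
      Disjoint (↑(Submonoid.powers πA) : Set A') ↑(PTA.pIdl p v π l) := by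
    intro l hl0 hl1
    rw [Set.disjoint_left]
    intro x hx hxp
    obtain ⟨k, hk⟩ := hx
    simp only at hk
    have hxk : πA ^ k ∈ PTA.pIdl p v π l := by rw [hk]; exact hxp
    have hmem : πA ∈ PTA.pIdl p v π l :=
      (PTA.pIdl_isPrime p v π hl0 hπ0r hπ1r).mem_of_pow_mem k hxk
    exact PTA.piA_not_mem p v π hl0 hπ0r hπ1r hmem
  refine ⟨fun l => Ideal.map (algebraMap A' (Localization.Away πA))
    (PTA.pIdl p v π (1 - (l : ℝ))), ?_, ?_⟩
  · intro l
    have hl0 : (0 : ℝ) < 1 - (l : ℝ) := by linarith [l.2.2]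
    have hl1 : (1 : ℝ) - (l : ℝ) < 1 := by linarith [l.2.1]
    exact IsLocalization.isPrime_of_isPrime_disjoint (Submonoid.powers πA) _ _
      (PTA.pIdl_isPrime p v π hl0 hπ0r hπ1r) (hdisj _ hl0 hl1)
  · intro l m hlm
    have hl0 : (0 : ℝ) < (l : ℝ) := l.2.1
    have hl1 : (l : ℝ) < 1 := l.2.2
    have hm0 : (0 : ℝ) < (m : ℝ) := m.2.1
    have hm1 : (m : ℝ) < 1 := m.2.2
    have hsub : PTA.pIdl p v π (1 - (l : ℝ)) ≤ PTA.pIdl p v π (1 - (m : ℝ)) :=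
      PTA.pIdl_mono p v π (by linarith)
    set κ : ℝ := 1 - ((l : ℝ) + (m : ℝ)) / 2 with hκ
    have hκ0 : 0 < κ := by rw [hκ]; linarith
    have hκ1 : κ < 1 := by rw [hκ]; linarith
    have hmκ : 1 - (m : ℝ) < κ := by rw [hκ]; linarith
    have hκl : κ < 1 - (l : ℝ) := by rw [hκ]; linarith
    have hF1 : PTA.sep p hp v π (κ / (1 - κ)) ∈ PTA.pIdl p v π (1 - (m : ℝ)) :=
      PTA.sep_mem p hp v π (by linarith) hmκ hκ1 hπ0r hπ1r
    have hF2 : PTA.sep p hp v π (κ / (1 - κ)) ∉ PTA.pIdl p v π (1 - (l : ℝ)) :=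
      PTA.sep_not_mem p hp v π hκ0 hκ1 hκl hπ0r hπ1r
    refine lt_of_le_of_ne (Ideal.map_mono hsub) ?_
    intro heq
    simp only at heq
    have hl0' : (0 : ℝ) < 1 - (l : ℝ) := by linarith
    have hl1' : (1 : ℝ) - (l : ℝ) < 1 := by linarith
    have hcm := IsLocalization.comap_map_of_isPrime_disjoint (Submonoid.powers πA)
      (Localization.Away πA) (I := PTA.pIdl p v π (1 - (l : ℝ)))
      (PTA.pIdl_isPrime p v π hl0' hπ0r hπ1r) (hdisj _ hl0' hl1')
    apply hF2
    rw [← hcm, Ideal.under, Ideal.mem_comap, heq]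
    exact Ideal.mem_map_of_mem _ hF1
end
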